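/- arXiv:1906.00661 — 5 statements merged into one kernel-verified Lean document; each statement's English description precedes it below -/
import Mathlib

section
/- For all real parameters a > 0 and b > 1 and every real z > γ₊, the Cauchy transform of the free beta prime distribution satisfies G_{μ_{a,b}}(z) = ((b+1)z + (1−a) − √((b−1)²z² − 2(ab+a+b−1)z + (a−1)²)) / (2z(1+z)), where the square root is the nonnegative real square root (the radicand is positive for z > γ₊, since γ₋ and γ₊ are its two roots). -/
set_option maxHeartbeats 1000000


open MeasureTheory Real
open Set

/-- `γ₋` for the free beta prime distribution. -/
noncomputable def gammaM (a b : ℝ) : ℝ :=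
  ((Real.sqrt (a * b) - Real.sqrt (a + b - 1)) / (b - 1)) ^ 2

/-- `γ₊` for the free beta prime distribution. -/
noncomputable def gammaP (a b : ℝ) : ℝ :=
  ((Real.sqrt (a * b) + Real.sqrt (a + b - 1)) / (b - 1)) ^ 2

/-- Density of the absolutely continuous part of the free beta prime distribution. -/
noncomputable def fbpDensity (a b : ℝ) : ℝ → ℝ :=
  Set.indicator (Set.Icc (gammaM a b) (gammaP a b))
    (fun x => (b - 1) * Real.sqrt (-((x - gammaP a b) * (x - gammaM a b)))
      / (2 * π * x * (1 + x)))

/-- The free beta prime distribution `fβ'(a, b)`. -/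
noncomputable def fbp (a b : ℝ) : Measure ℝ :=
  volume.withDensity (fun x => ENNReal.ofReal (fbpDensity a b x))
    + ENNReal.ofReal (max (1 - a) 0) • Measure.dirac 0

private lemma hasDerivAt_sqrt_one_sub_sq {t : ℝ} (h1 : -1 < t) (h2 : t < 1) :
    HasDerivAt (fun s : ℝ => Real.sqrt (1 - s^2)) (-t / Real.sqrt (1 - t^2)) t := by
  have hpos : (0:ℝ) < 1 - t^2 := by nlinarith
  have h := (Real.hasDerivAt_sqrt (ne_of_gt hpos)).comp t
    (((hasDerivAt_id t).pow 2).const_sub 1)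
  refine h.congr_deriv (Eq.symm ?_)
  have hs : Real.sqrt (1 - t^2) ≠ 0 := by positivity
  simp only [id]
  field_simp
  ring

private lemma hasDerivAt_F_gt {u t : ℝ} (hu : 1 < u) (h1 : -1 < t) (h2 : t < 1) :
    HasDerivAt (fun s : ℝ => u * Real.arcsin s - Real.sqrt (1 - s^2)
        + Real.sqrt (u^2 - 1) * Real.arcsin ((1 - u*s)/(u - s)))
      (Real.sqrt (1 - t^2) / (u - t)) t := by
  have hpos : (0:ℝ) < 1 - t^2 := by nlinarith
  have hut : (0:ℝ) < u - t := by linarith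
  have hs : Real.sqrt (1 - t^2) ≠ 0 := by positivity
  have hu2 : (0:ℝ) < u^2 - 1 := by nlinarith
  have hsu : Real.sqrt (u^2 - 1) ≠ 0 := by positivity
  have e1 : Real.sqrt (u^2-1)^2 = u^2-1 := Real.sq_sqrt hu2.le
  have e2 : Real.sqrt (1-t^2)^2 = 1-t^2 := Real.sq_sqrt hpos.le
  have hd1 : HasDerivAt (fun s : ℝ => u * Real.arcsin s - Real.sqrt (1 - s^2))
      ((u + t) / Real.sqrt (1 - t^2)) t := by
    have ha := (Real.hasDerivAt_arcsin (ne_of_gt h1) (ne_of_lt h2)).const_mul u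
    have := ha.sub (hasDerivAt_sqrt_one_sub_sq h1 h2)
    refine this.congr_deriv (Eq.symm ?_)
    field_simp
    ring
  have hw : HasDerivAt (fun s : ℝ => (1 - u*s)/(u - s)) ((1 - u^2)/(u - t)^2) t := by
    have hnum : HasDerivAt (fun s : ℝ => 1 - u*s) (-u) t := by
      simpa using ((hasDerivAt_id t).const_mul u).const_sub 1
    have hden : HasDerivAt (fun s : ℝ => u - s) (-1) t := by
      simpa using (hasDerivAt_id t).const_sub u
    have := hnum.div hden (ne_of_gt hut)
    refine this.congr_deriv (Eq.symm ?_)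
    field_simp
    ring
  set w : ℝ := (1 - u*t)/(u - t) with hwdef
  have hsqw : Real.sqrt (1 - w^2) = Real.sqrt (u^2-1) * Real.sqrt (1 - t^2) / (u - t) := by
    have h : 1 - w^2 = (Real.sqrt (u^2-1) * Real.sqrt (1 - t^2) / (u - t))^2 := by
      rw [hwdef, div_pow, div_pow, mul_pow, e1, e2]
      field_simp
      ring
    rw [h, Real.sqrt_sq (by positivity)]
  have hwne1 : w ≠ 1 := by
    rw [hwdef]
    intro h
    rw [div_eq_one_iff_eq hut.ne'] at h
    nlinarith [mul_pos (by linarith : (0:ℝ) < t+1) (by linarith : (0:ℝ) < u-1)]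
  have hwnem1 : w ≠ -1 := by
    rw [hwdef]
    intro h
    rw [div_eq_iff hut.ne'] at h
    nlinarith [mul_pos (by linarith : (0:ℝ) < u+1) (by linarith : (0:ℝ) < 1-t)]
  have hd2 : HasDerivAt (fun s : ℝ => Real.sqrt (u^2 - 1) * Real.arcsin ((1 - u*s)/(u - s)))
      (-(u^2 - 1) / ((u - t) * Real.sqrt (1 - t^2))) t := by
    have ha := ((Real.hasDerivAt_arcsin hwnem1 hwne1).comp t hw).const_mul (Real.sqrt (u^2 - 1))
    refine ha.congr_deriv (Eq.symm ?_)
    rw [hsqw]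
    field_simp
    ring
  have := hd1.add hd2
  refine this.congr_deriv (Eq.symm ?_)
  field_simp
  linear_combination e2

private lemma J_gt {u : ℝ} (hu : 1 < u) :
    ∫ t in (-1:ℝ)..1, Real.sqrt (1 - t^2) / (u - t) = π * (u - Real.sqrt (u^2 - 1)) := by
  have hne : ∀ s ∈ Set.Icc (-1:ℝ) 1, u - s ≠ 0 := by
    rintro s ⟨_, hs2⟩; intro h; nlinarith
  have hcont : ContinuousOn (fun s : ℝ => u * Real.arcsin s - Real.sqrt (1 - s^2)
      + Real.sqrt (u^2 - 1) * Real.arcsin ((1 - u*s)/(u - s))) (Set.Icc (-1:ℝ) 1) := by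
    apply ContinuousOn.add
    · apply ContinuousOn.sub
      · exact (continuous_const.mul Real.continuous_arcsin).continuousOn
      · fun_prop
    · apply ContinuousOn.mul continuousOn_const
      exact Real.continuous_arcsin.comp_continuousOn
        (ContinuousOn.div (by fun_prop) (by fun_prop) hne)
  have hint : IntervalIntegrable (fun t : ℝ => Real.sqrt (1 - t^2) / (u - t))
      volume (-1) 1 := by
    apply ContinuousOn.intervalIntegrable
    rw [Set.uIcc_of_le (by norm_num : (-1:ℝ) ≤ 1)]
    exact ContinuousOn.div (by fun_prop) (by fun_prop) hne
  rw [intervalIntegral.integral_eq_sub_of_hasDeriv_right_of_le (by norm_num) hcont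
    (fun t ht => ((hasDerivAt_F_gt hu ht.1 ht.2).hasDerivWithinAt)) hint]
  have hu1 : u - 1 ≠ 0 := by linarith
  have hu1' : u + 1 ≠ 0 := by linarith
  have e3 : (1 - u*1)/(u - 1) = -1 := by field_simp; ring
  have e4 : (1 - u*(-1))/(u - (-1)) = 1 := by rw [div_eq_one_iff_eq (by linarith)]; ring
  rw [e3, e4]
  simp only [Real.arcsin_one, Real.arcsin_neg_one]
  norm_num
  ring

private lemma intervalIntegrable_J_one :
    IntervalIntegrable (fun t : ℝ => Real.sqrt (1 - t^2) / (1 - t)) volume (-1) 1 := by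
  have hg : IntervalIntegrable (fun t : ℝ => Real.sqrt 2 * (1 - t) ^ (-(1/2) : ℝ))
      volume (-1) 1 := by
    apply IntervalIntegrable.const_mul
    have := (intervalIntegral.intervalIntegrable_rpow'
      (by norm_num : (-1:ℝ) < -(1/2)) (a := 0) (b := 2)).comp_sub_left 1
    norm_num at this
    exact this.symm
  apply hg.mono_fun
  · exact (Measurable.aestronglyMeasurable (by fun_prop))
  · rw [Set.uIoc_of_le (by norm_num : (-1:ℝ) ≤ 1)]
    refine (ae_restrict_iff' measurableSet_Ioc).2 (Filter.Eventually.of_forall ?_)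
    rintro t ⟨ht1, ht2⟩
    have h1t : (0:ℝ) ≤ 1 - t := by linarith
    have h1t' : (0:ℝ) ≤ 1 + t := by linarith
    have hsp : Real.sqrt (1 - t^2) = Real.sqrt (1+t) * Real.sqrt (1-t) := by
      rw [← Real.sqrt_mul h1t']
      ring_nf
    have hrp : (1-t) ^ (-(1/2):ℝ) = (Real.sqrt (1-t))⁻¹ := by
      rw [Real.rpow_neg h1t, ← Real.sqrt_eq_rpow]
    dsimp only
    rw [Real.norm_eq_abs, Real.norm_eq_abs, abs_of_nonneg (by positivity),
      abs_of_nonneg (by positivity), hsp, hrp]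
    rcases eq_or_lt_of_le h1t with h|h
    · rw [← h]
      simp
    · have hst : 0 < Real.sqrt (1-t) := Real.sqrt_pos.2 h
      have e : Real.sqrt (1+t) * Real.sqrt (1-t) / (1-t) = Real.sqrt (1+t) / Real.sqrt (1-t) := by
        nth_rewrite 2 [← Real.mul_self_sqrt h1t]
        rw [mul_div_mul_right _ _ hst.ne']
      rw [e, mul_comm (Real.sqrt 2), inv_mul_eq_div]
      gcongr
      linarith

private lemma J_one : ∫ t in (-1:ℝ)..1, Real.sqrt (1 - t^2) / (1 - t) = π := by
  have hcont : ContinuousOn (fun s : ℝ => Real.arcsin s - Real.sqrt (1 - s^2))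
      (Set.Icc (-1:ℝ) 1) := by
    exact (Real.continuous_arcsin.sub (by fun_prop)).continuousOn
  have hderiv : ∀ t ∈ Set.Ioo (-1:ℝ) 1,
      HasDerivAt (fun s : ℝ => Real.arcsin s - Real.sqrt (1 - s^2))
        (Real.sqrt (1 - t^2) / (1 - t)) t := by
    rintro t ⟨h1, h2⟩
    have hpos : (0:ℝ) < 1 - t^2 := by nlinarith
    have hs : Real.sqrt (1-t^2) ≠ 0 := by positivity
    have e2 : Real.sqrt (1-t^2)^2 = 1-t^2 := Real.sq_sqrt hpos.le
    have := (Real.hasDerivAt_arcsin (ne_of_gt h1) (ne_of_lt h2)).sub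
      (hasDerivAt_sqrt_one_sub_sq h1 h2)
    have h1t : (0:ℝ) < 1 - t := by linarith
    refine this.congr_deriv (Eq.symm ?_)
    have e3 : (1:ℝ)/Real.sqrt (1-t^2) - -t/Real.sqrt (1-t^2) = (1+t)/Real.sqrt (1-t^2) := by
      ring
    rw [e3, div_eq_div_iff h1t.ne' (by positivity)]
    linear_combination e2
  rw [intervalIntegral.integral_eq_sub_of_hasDeriv_right_of_le (by norm_num) hcont
    (fun t ht => (hderiv t ht).hasDerivWithinAt) intervalIntegrable_J_one]
  simp [Real.arcsin_one, Real.arcsin_neg_one]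

private lemma J_ge {u : ℝ} (hu : 1 ≤ u) :
    ∫ t in (-1:ℝ)..1, Real.sqrt (1 - t^2) / (u - t) = π * (u - Real.sqrt (u^2 - 1)) := by
  rcases eq_or_lt_of_le hu with h|h
  · rw [← h]
    norm_num [J_one]
  · exact J_gt h

private lemma J_le {u : ℝ} (hu : u ≤ -1) :
    ∫ t in (-1:ℝ)..1, Real.sqrt (1 - t^2) / (u - t) = π * (u + Real.sqrt (u^2 - 1)) := by
  have h1 : (fun t : ℝ => Real.sqrt (1 - t^2) / (u - t))
      = fun t : ℝ => -((fun s : ℝ => Real.sqrt (1 - s^2) / ((-u) - s)) (-t)) := by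
    funext t
    simp only
    rw [show (-u) - (-t) = -(u - t) by ring, div_neg, neg_neg, neg_pow, show ((-1:ℝ))^2 = 1 by norm_num, one_mul]
  rw [h1, intervalIntegral.integral_neg, intervalIntegral.integral_comp_neg
    (fun s : ℝ => Real.sqrt (1 - s^2) / ((-u) - s))]
  norm_num
  rw [J_ge (by linarith)]
  have : (-u)^2 = u^2 := by ring
  rw [this]
  ring

private lemma intInt_J {u : ℝ} (hu : 1 ≤ u ∨ u ≤ -1) :
    IntervalIntegrable (fun t : ℝ => Real.sqrt (1 - t^2) / (u - t)) volume (-1) 1 := by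
  rcases hu with hu | hu
  · rcases eq_or_lt_of_le hu with h|h
    · rw [← h]
      exact intervalIntegrable_J_one
    · apply ContinuousOn.intervalIntegrable
      rw [Set.uIcc_of_le (by norm_num : (-1:ℝ) ≤ 1)]
      refine ContinuousOn.div (by fun_prop) (by fun_prop) ?_
      rintro s ⟨_, hs2⟩ hc
      nlinarith
  · rcases eq_or_lt_of_le hu with h|h
    · have he : (fun t : ℝ => Real.sqrt (1 - t^2) / (u - t))
          = fun t : ℝ => -((fun s : ℝ => Real.sqrt (1 - s^2) / (1 - s)) (0 - t)) := by
        funext t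
        simp only [zero_sub, h]
        rw [show (1:ℝ) - -t = -(-1 - t) by ring, div_neg, neg_neg]
        ring_nf
      rw [he]
      have h1 := ((intervalIntegrable_J_one.comp_sub_left 0).symm).neg
      have hb : (0:ℝ) - 1 = -1 := by norm_num
      have hb' : (0:ℝ) - (-1) = 1 := by norm_num
      rw [hb, hb'] at h1
      exact h1
    · apply ContinuousOn.intervalIntegrable
      rw [Set.uIcc_of_le (by norm_num : (-1:ℝ) ≤ 1)]
      refine ContinuousOn.div (by fun_prop) (by fun_prop) ?_
      rintro s ⟨hs1, _⟩ hc
      nlinarith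

private lemma K_subst (α β c : ℝ) (hαβ : α < β) :
    (∫ x in α..β, Real.sqrt ((β - x) * (x - α)) / (c - x))
      = ((β-α)/2) * ∫ t in (-1:ℝ)..1, Real.sqrt (1 - t^2)
          / ((c - (α+β)/2)/((β-α)/2) - t) := by
  have hr : (0:ℝ) < (β-α)/2 := by linarith
  set r : ℝ := (β-α)/2 with hrdef
  set m : ℝ := (α+β)/2 with hmdef
  have key : ∀ t : ℝ, Real.sqrt ((β - (r*t+m)) * ((r*t+m) - α)) / (c - (r*t+m))
      = Real.sqrt (1 - t^2) / ((c - m)/r - t) := by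
    intro t
    have e1 : (β - (r*t+m)) * ((r*t+m) - α) = r^2 * (1 - t^2) := by
      rw [hrdef, hmdef]; ring
    have e3 : c - (r*t+m) = r * ((c - m)/r - t) := by
      field_simp
      ring
    rw [e1, e3, Real.sqrt_mul (sq_nonneg r), Real.sqrt_sq hr.le,
      mul_div_mul_left _ _ hr.ne']
  have h := intervalIntegral.integral_comp_mul_add
    (fun x => Real.sqrt ((β - x) * (x - α)) / (c - x)) hr.ne' m (a := -1) (b := 1)
  have hb1 : r * (-1) + m = α := by rw [hrdef, hmdef]; ring
  have hb2 : r * 1 + m = β := by rw [hrdef, hmdef]; ring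
  rw [hb1, hb2, smul_eq_mul] at h
  have h2 : ∫ x in α..β, Real.sqrt ((β - x) * (x - α)) / (c - x)
      = r * ∫ t in (-1:ℝ)..1, Real.sqrt ((β - (r*t+m)) * ((r*t+m) - α)) / (c - (r*t+m)) := by
    rw [h, ← mul_assoc, mul_inv_cancel₀ hr.ne', one_mul]
  rw [h2]
  congr 1
  exact intervalIntegral.integral_congr (fun t _ => key t)

private lemma K_gt {α β c : ℝ} (hαβ : α < β) (hc : β < c) :
    (∫ x in α..β, Real.sqrt ((β - x) * (x - α)) / (c - x))
      = π * (c - (α+β)/2 - Real.sqrt ((c - α)*(c - β))) := by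
  obtain ⟨r, hrdef⟩ : ∃ r:ℝ, r = (β-α)/2 := ⟨_, rfl⟩
  obtain ⟨m, hmdef⟩ : ∃ m:ℝ, m = (α+β)/2 := ⟨_, rfl⟩
  have hr : (0:ℝ) < r := by rw [hrdef]; linarith
  have hu : 1 < (c-m)/r := by
    rw [lt_div_iff₀ hr, one_mul, hrdef, hmdef]
    linarith
  rw [K_subst α β c hαβ, ← hrdef, ← hmdef, J_gt hu]
  have hXnn : (0:ℝ) ≤ (c-α)*(c-β) := by nlinarith
  have e : ((c-m)/r)^2 - 1 = ((c-α)*(c-β))/r^2 := by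
    rw [div_pow, hrdef, hmdef]
    rw [div_sub' (pow_ne_zero 2 (ne_of_gt (by linarith : (0:ℝ) < (β-α)/2)))]
    congr 1
    ring
  rw [e, Real.sqrt_div hXnn, Real.sqrt_sq hr.le, hmdef]
  field_simp

private lemma K_le {α β c : ℝ} (hαβ : α < β) (hc : c ≤ α) :
    (∫ x in α..β, Real.sqrt ((β - x) * (x - α)) / (c - x))
      = π * (c - (α+β)/2 + Real.sqrt ((c - α)*(c - β))) := by
  obtain ⟨r, hrdef⟩ : ∃ r:ℝ, r = (β-α)/2 := ⟨_, rfl⟩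
  obtain ⟨m, hmdef⟩ : ∃ m:ℝ, m = (α+β)/2 := ⟨_, rfl⟩
  have hr : (0:ℝ) < r := by rw [hrdef]; linarith
  have hu : (c-m)/r ≤ -1 := by
    rw [div_le_iff₀ hr, hrdef, hmdef]
    linarith
  rw [K_subst α β c hαβ, ← hrdef, ← hmdef, J_le hu]
  have hXnn : (0:ℝ) ≤ (c-α)*(c-β) := by nlinarith
  have e : ((c-m)/r)^2 - 1 = ((c-α)*(c-β))/r^2 := by
    rw [div_pow, hrdef, hmdef]
    rw [div_sub' (pow_ne_zero 2 (ne_of_gt (by linarith : (0:ℝ) < (β-α)/2)))]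
    congr 1
    ring
  rw [e, Real.sqrt_div hXnn, Real.sqrt_sq hr.le, hmdef]
  field_simp

private lemma intInt_K {α β c : ℝ} (hαβ : α < β) (hc : c ≤ α ∨ β < c) :
    IntervalIntegrable (fun x => Real.sqrt ((β - x)*(x - α)) / (c - x)) volume α β := by
  obtain ⟨r, hrdef⟩ : ∃ r:ℝ, r = (β-α)/2 := ⟨_, rfl⟩
  obtain ⟨m, hmdef⟩ : ∃ m:ℝ, m = (α+β)/2 := ⟨_, rfl⟩
  have hr : (0:ℝ) < r := by rw [hrdef]; linarith
  have hu : 1 ≤ (c-m)/r ∨ (c-m)/r ≤ -1 := by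
    rcases hc with h|h
    · right; rw [div_le_iff₀ hr, hrdef, hmdef]; linarith
    · left; rw [le_div_iff₀ hr, one_mul, hrdef, hmdef]; linarith
  have hJ := ((intInt_J hu).comp_mul_right (c := r⁻¹)).comp_sub_right m
  have hrne : r ≠ 0 := hr.ne'
  have hb1 : (-1)/r⁻¹ + m = α := by
    rw [div_eq_mul_inv, inv_inv, hrdef, hmdef]
    ring
  have hb2 : 1/r⁻¹ + m = β := by
    rw [div_eq_mul_inv, inv_inv, hrdef, hmdef]
    ring
  rw [hb1, hb2] at hJ
  have he : (fun x => Real.sqrt ((β - x)*(x - α)) / (c - x))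
      = fun x => Real.sqrt (1 - ((x - m) * r⁻¹)^2) / ((c-m)/r - (x - m) * r⁻¹) := by
    funext x
    have e1 : (β - x)*(x - α) = r^2 * (1 - ((x - m) * r⁻¹)^2) := by
      have h2 : r^2 * (1 - ((x - m) * r⁻¹)^2) = r^2 - (x-m)^2 := by
        field_simp
      rw [h2, hrdef, hmdef]
      ring
    have e3 : c - x = r * ((c-m)/r - (x - m) * r⁻¹) := by
      field_simp
      ring
    rw [e1, e3, Real.sqrt_mul (sq_nonneg r), Real.sqrt_sq hr.le,
      mul_div_mul_left _ _ hr.ne']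
  rw [he]
  exact hJ

theorem cauchy_transform_fbp (a b z : ℝ) (ha : 0 < a) (hb : 1 < b)
    (hz : gammaP a b < z) :
    ∫ x, 1 / (z - x) ∂(fbp a b)
      = ((b + 1) * z + (1 - a)
          - Real.sqrt ((b - 1) ^ 2 * z ^ 2 - 2 * (a * b + a + b - 1) * z + (a - 1) ^ 2))
        / (2 * z * (1 + z)) := by
  have hb1 : (0:ℝ) < b - 1 := by linarith
  have hab1 : (0:ℝ) < a + b - 1 := by linarith
  have hq : Real.sqrt (a*b) ^ 2 = a*b := Real.sq_sqrt (by positivity)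
  have hs : Real.sqrt (a+b-1) ^ 2 = a+b-1 := Real.sq_sqrt hab1.le
  have hqpos : 0 < Real.sqrt (a*b) := Real.sqrt_pos.2 (by positivity)
  have hspos : 0 < Real.sqrt (a+b-1) := Real.sqrt_pos.2 hab1
  have hM0 : 0 ≤ gammaM a b := sq_nonneg _
  have hdiff : gammaP a b - gammaM a b
      = 4*(Real.sqrt (a*b)*Real.sqrt (a+b-1))/(b-1)^2 := by
    unfold gammaM gammaP
    rw [div_pow, div_pow, div_sub_div_same]
    congr 1
    ring
  have hMP : gammaM a b < gammaP a b := by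
    have h4 : 0 < 4*(Real.sqrt (a*b)*Real.sqrt (a+b-1))/(b-1)^2 := by positivity
    linarith
  have hz0 : (0:ℝ) < z := lt_of_le_of_lt (hM0.trans hMP.le) hz
  have h1z : (0:ℝ) < 1 + z := by linarith
  have hsum : gammaM a b + gammaP a b = 2*(a*b + a + b - 1)/(b-1)^2 := by
    unfold gammaM gammaP
    rw [div_pow, div_pow, ← add_div]
    congr 1
    linear_combination 2*hq + 2*hs
  have hprod : gammaM a b * gammaP a b = (a-1)^2/(b-1)^2 := by
    have h1 : gammaM a b * gammaP a b
        = ((Real.sqrt (a*b) - Real.sqrt (a+b-1)) * (Real.sqrt (a*b) + Real.sqrt (a+b-1))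
            / ((b-1)*(b-1)))^2 := by
      unfold gammaM gammaP
      rw [← mul_pow]
      congr 1
      rw [div_mul_div_comm]
    rw [h1, show (Real.sqrt (a*b) - Real.sqrt (a+b-1))
        * (Real.sqrt (a*b) + Real.sqrt (a+b-1)) = (a-1)*(b-1) from by
          linear_combination hq - hs,
      mul_div_mul_right _ _ hb1.ne', div_pow]
  -- sqrt value facts
  have hSM0 : Real.sqrt ((0 - gammaM a b)*(0 - gammaP a b)) = |a-1|/(b-1) := by
    rw [show (0 - gammaM a b)*(0 - gammaP a b) = gammaM a b * gammaP a b from by ring,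
      hprod, Real.sqrt_div (sq_nonneg _), Real.sqrt_sq_eq_abs, Real.sqrt_sq hb1.le]
  have hSM1 : Real.sqrt ((-1 - gammaM a b)*(-1 - gammaP a b)) = (a+b)/(b-1) := by
    have key : 1 + (2*(a*b+a+b-1))/(b-1)^2 + (a-1)^2/(b-1)^2 = (a+b)^2/(b-1)^2 := by
      field_simp
      ring
    have e : (-1 - gammaM a b)*(-1 - gammaP a b) = (a+b)^2/(b-1)^2 := by
      rw [← key]
      linear_combination hsum + hprod
    rw [e, Real.sqrt_div (sq_nonneg _), Real.sqrt_sq (by linarith : (0:ℝ) ≤ a+b),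
      Real.sqrt_sq hb1.le]
  have hrad : Real.sqrt ((b-1)^2*z^2 - 2*(a*b+a+b-1)*z + (a-1)^2)
      = (b-1) * Real.sqrt ((z - gammaM a b)*(z - gammaP a b)) := by
    have e : (b-1)^2*z^2 - 2*(a*b+a+b-1)*z + (a-1)^2
        = (b-1)^2*((z - gammaM a b)*(z - gammaP a b)) := by
      have e2 : (z - gammaM a b)*(z - gammaP a b)
          = z^2 - (gammaM a b + gammaP a b)*z + gammaM a b * gammaP a b := by ring
      rw [e2, hsum, hprod]
      field_simp
    rw [e, Real.sqrt_mul (sq_nonneg _), Real.sqrt_sq hb1.le]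
  -- density facts
  have hdnn : ∀ x, 0 ≤ fbpDensity a b x := by
    intro x
    unfold fbpDensity
    apply Set.indicator_nonneg
    rintro x ⟨hx1, hx2⟩
    apply div_nonneg
    · have : -((x - gammaP a b) * (x - gammaM a b)) = (gammaP a b - x)*(x - gammaM a b) := by
        ring
      positivity
    · have hx0 : 0 ≤ x := hM0.trans hx1
      positivity
  have hmeas : Measurable (fun x => (fbpDensity a b x).toNNReal) := by
    apply Measurable.real_toNNReal
    unfold fbpDensity
    apply Measurable.indicator ?_ measurableSet_Icc
    fun_prop
  -- the pointwise splitting identity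
  have hsplit : Set.EqOn
      (fun x => fbpDensity a b x * (1/(z-x)))
      (fun x => (-((b-1)/(2*π)/z)) * (Real.sqrt ((gammaP a b - x)*(x - gammaM a b))/(0-x))
        + ((b-1)/(2*π)/(1+z)) * (Real.sqrt ((gammaP a b - x)*(x - gammaM a b))/(-1-x))
        + ((b-1)/(2*π)/(z*(1+z))) * (Real.sqrt ((gammaP a b - x)*(x - gammaM a b))/(z-x)))
      (Set.Icc (gammaM a b) (gammaP a b)) := by
    rintro x ⟨hx1, hx2⟩
    have hin : x ∈ Set.Icc (gammaM a b) (gammaP a b) := ⟨hx1, hx2⟩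
    simp only [fbpDensity, Set.indicator_of_mem hin]
    have hxz : z - x ≠ 0 := by
      have : x < z := lt_of_le_of_lt hx2 hz
      intro h; linarith
    have hsq : -((x - gammaP a b) * (x - gammaM a b))
        = (gammaP a b - x)*(x - gammaM a b) := by ring
    rw [hsq]
    rcases eq_or_lt_of_le (hM0.trans hx1 : (0:ℝ) ≤ x) with h0 | h0
    · -- x = 0, hence gammaM a b = 0
      have hM : gammaM a b = 0 := le_antisymm (by rw [← h0] at hx1; exact hx1) hM0
      rw [← h0, hM]
      norm_num
    · have hx0 : x ≠ 0 := h0.ne'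
      have h1x : 1 + x ≠ 0 := by positivity
      have hm1x : -1 - x ≠ 0 := by intro hcon; nlinarith
      have h0x : 0 - x ≠ 0 := by simpa using hx0
      have hpi : π ≠ 0 := Real.pi_ne_zero
      set S := Real.sqrt ((gammaP a b - x)*(x - gammaM a b)) with hS
      field_simp
      ring
  -- interval integrability of pieces
  have hK0 := intInt_K (α := gammaM a b) (β := gammaP a b) (c := 0) hMP (Or.inl hM0)
  have hK1 := intInt_K (α := gammaM a b) (β := gammaP a b) (c := -1) hMP
    (Or.inl (by linarith : (-1:ℝ) ≤ gammaM a b))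
  have hKz := intInt_K (α := gammaM a b) (β := gammaP a b) (c := z) hMP (Or.inr hz)
  have hIntSum : IntervalIntegrable
      (fun x => (-((b-1)/(2*π)/z)) * (Real.sqrt ((gammaP a b - x)*(x - gammaM a b))/(0-x))
        + ((b-1)/(2*π)/(1+z)) * (Real.sqrt ((gammaP a b - x)*(x - gammaM a b))/(-1-x))
        + ((b-1)/(2*π)/(z*(1+z))) * (Real.sqrt ((gammaP a b - x)*(x - gammaM a b))/(z-x)))
      volume (gammaM a b) (gammaP a b) := by
    exact ((hK0.const_mul _).add (hK1.const_mul _)).add (hKz.const_mul _)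
  -- integrable product on Ioc
  have hIocInt : IntegrableOn
      (fun x => fbpDensity a b x * (1/(z-x))) (Set.Ioc (gammaM a b) (gammaP a b)) volume := by
    have h1 : IntegrableOn _ (Set.Ioc (gammaM a b) (gammaP a b)) volume :=
      (intervalIntegrable_iff_integrableOn_Ioc_of_le hMP.le).1 hIntSum
    exact h1.congr ((ae_restrict_iff' measurableSet_Ioc).2 (Filter.Eventually.of_forall
      (fun x hx => (hsplit (Set.Ioc_subset_Icc_self hx)).symm)))
  -- the smul integrand equals an indicator
  have hsmul_eq : (fun x => ((fbpDensity a b x).toNNReal : ℝ) • (1/(z-x)))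
      = Set.indicator (Set.Icc (gammaM a b) (gammaP a b))
          (fun x => fbpDensity a b x * (1/(z-x))) := by
    funext x
    rw [smul_eq_mul, Real.coe_toNNReal _ (hdnn x)]
    by_cases hx : x ∈ Set.Icc (gammaM a b) (gammaP a b)
    · rw [Set.indicator_of_mem hx]
    · rw [Set.indicator_of_notMem hx]
      unfold fbpDensity
      rw [Set.indicator_of_notMem hx, zero_mul]
  -- split the measure
  have hwd : volume.withDensity (fun x => ENNReal.ofReal (fbpDensity a b x))
      = volume.withDensity (fun x => (((fun y => (fbpDensity a b y).toNNReal) x : NNReal) : ENNReal)) := rfl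
  have hInt1 : Integrable (fun x => 1/(z-x))
      (volume.withDensity (fun x => ENNReal.ofReal (fbpDensity a b x))) := by
    rw [hwd]
    rw [integrable_withDensity_iff_integrable_smul hmeas]
    have : (fun x => ((fbpDensity a b x).toNNReal : NNReal) • (1/(z-x)))
        = fun x => ((fbpDensity a b x).toNNReal : ℝ) • (1/(z-x)) := by
      funext x
      rw [NNReal.smul_def]
    rw [this, hsmul_eq]
    rw [integrable_indicator_iff measurableSet_Icc]
    exact (integrableOn_Icc_iff_integrableOn_Ioc).2 hIocInt
  have hInt2 : Integrable (fun x : ℝ => 1/(z-x))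
      ((ENNReal.ofReal (max (1-a) 0)) • Measure.dirac (0:ℝ)) := by
    apply Integrable.smul_measure _ ENNReal.ofReal_ne_top
    have : Integrable (fun _ : ℝ => 1/(z-(0:ℝ))) (Measure.dirac (0:ℝ)) := integrable_const _
    apply this.congr
    rw [Filter.EventuallyEq, MeasureTheory.ae_dirac_eq]
    exact Filter.eventually_pure.2 rfl
  rw [show fbp a b = volume.withDensity (fun x => ENNReal.ofReal (fbpDensity a b x))
      + (ENNReal.ofReal (max (1-a) 0)) • Measure.dirac (0:ℝ) from rfl]
  rw [integral_add_measure hInt1 hInt2]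
  -- dirac part
  have hdirac : ∫ x, 1/(z-x) ∂((ENNReal.ofReal (max (1-a) 0)) • Measure.dirac (0:ℝ))
      = (max (1-a) 0) * (1/z) := by
    rw [integral_smul_measure, integral_dirac, ENNReal.toReal_ofReal (le_max_right _ _)]
    norm_num
  rw [hdirac]
  -- withDensity part
  rw [hwd, integral_withDensity_eq_integral_smul hmeas]
  have hsmul_eq' : (fun x => ((fbpDensity a b x).toNNReal : NNReal) • (1/(z-x)))
      = Set.indicator (Set.Icc (gammaM a b) (gammaP a b))
          (fun x => fbpDensity a b x * (1/(z-x))) := by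
    rw [← hsmul_eq]
    funext x
    rw [NNReal.smul_def]
  rw [hsmul_eq', integral_indicator measurableSet_Icc,
    MeasureTheory.integral_Icc_eq_integral_Ioc,
    ← intervalIntegral.integral_of_le hMP.le,
    intervalIntegral.integral_congr (by rw [Set.uIcc_of_le hMP.le]; exact hsplit)]
  rw [intervalIntegral.integral_add ((hK0.const_mul _).add (hK1.const_mul _)) (hKz.const_mul _),
    intervalIntegral.integral_add (hK0.const_mul _) (hK1.const_mul _),
    intervalIntegral.integral_const_mul, intervalIntegral.integral_const_mul,
    intervalIntegral.integral_const_mul]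
  rw [K_le hMP hM0, K_le hMP (by linarith : (-1:ℝ) ≤ gammaM a b), K_gt hMP hz]
  rw [hSM0, hSM1, hsum, hrad]
  have hpi : π ≠ 0 := Real.pi_ne_zero
  set S := Real.sqrt ((z - gammaM a b)*(z - gammaP a b)) with hS
  rcases le_total a 1 with hcase | hcase
  · rw [abs_of_nonpos (by linarith : a - 1 ≤ 0), max_eq_left (by linarith : (0:ℝ) ≤ 1-a)]
    field_simp
    ring
  · rw [abs_of_nonneg (by linarith : (0:ℝ) ≤ a - 1), max_eq_right (by linarith : 1-a ≤ 0)]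
    field_simp
    ring
end

section
/- For all real parameters a > 0 and b > 1, the free beta prime distribution μ_{a,b} is a probability measure; that is, ∫_{γ₋}^{γ₊} (b−1)√(−(x−γ₊)(x−γ₋))/(2π x(1+x)) dx + max(1−a, 0) = 1. -/
open MeasureTheory Real

lemma sqrtg_pos {p q x : ℝ} (hx : x ∈ Set.Ioo p q) :
    0 < Real.sqrt ((q - x) * (x - p)) := by
  apply Real.sqrt_pos.mpr
  nlinarith [hx.1, hx.2]

lemma hasDerivA {p q x : ℝ} (hpq : p < q) (hx : x ∈ Set.Ioo p q) :
    HasDerivAt (fun y => Real.arcsin ((2 * y - (p + q)) / (q - p)))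
      (1 / Real.sqrt ((q - x) * (x - p))) x := by
  have hs : (0:ℝ) < q - p := by linarith
  have hG : (0:ℝ) < (q - x) * (x - p) := by nlinarith [hx.1, hx.2]
  have hg : 0 < Real.sqrt ((q - x) * (x - p)) := sqrtg_pos hx
  have hu : HasDerivAt (fun y => (2 * y - (p + q)) / (q - p)) (2 / (q - p)) x := by
    simpa using (((hasDerivAt_id x).const_mul 2).sub_const (p + q)).div_const (q - p)
  have h1 : (2 * x - (p + q)) / (q - p) ≠ -1 := by
    intro h; rw [div_eq_iff hs.ne'] at h; nlinarith [hx.1]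
  have h2 : (2 * x - (p + q)) / (q - p) ≠ 1 := by
    intro h; rw [div_eq_iff hs.ne'] at h; nlinarith [hx.2]
  have h := (Real.hasDerivAt_arcsin h1 h2).comp x hu
  have hsq : 1 - ((2 * x - (p + q)) / (q - p)) ^ 2
      = (2 * Real.sqrt ((q - x) * (x - p)) / (q - p)) ^ 2 := by
    rw [div_pow, div_pow, mul_pow, Real.sq_sqrt hG.le]
    field_simp
    ring
  rw [Function.comp_def] at h
  refine h.congr_deriv (Eq.symm ?_)
  rw [hsq, Real.sqrt_sq (by positivity)]
  field_simp

lemma hasDerivB {p q x : ℝ} (hp : 0 < p) (hpq : p < q) (hx : x ∈ Set.Ioo p q) :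
    HasDerivAt (fun y => Real.arcsin (((p + q) * y - 2 * (p * q)) / ((q - p) * y)))
      (Real.sqrt (p * q) / (x * Real.sqrt ((q - x) * (x - p)))) x := by
  have hs : (0:ℝ) < q - p := by linarith
  have hx0 : 0 < x := lt_trans hp hx.1
  have hG : (0:ℝ) < (q - x) * (x - p) := by nlinarith [hx.1, hx.2]
  have hg : 0 < Real.sqrt ((q - x) * (x - p)) := sqrtg_pos hx
  have hpq0 : (0:ℝ) < p * q := mul_pos hp (hp.trans hpq)
  have hsp : 0 < Real.sqrt (p * q) := Real.sqrt_pos.mpr hpq0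
  have hden : ((q - p) * x) ≠ 0 := mul_ne_zero hs.ne' hx0.ne'
  have hnum' : HasDerivAt (fun y => (p + q) * y - 2 * (p * q)) (p + q) x := by
    simpa using ((hasDerivAt_id x).const_mul (p + q)).sub_const (2 * (p * q))
  have hden' : HasDerivAt (fun y => (q - p) * y) (q - p) x := by
    simpa using (hasDerivAt_id x).const_mul (q - p)
  have hu := hnum'.div hden' hden
  have hu' : HasDerivAt (fun y => ((p + q) * y - 2 * (p * q)) / ((q - p) * y))
      (2 * (p * q) / ((q - p) * x ^ 2)) x := by
    refine hu.congr_deriv (Eq.symm ?_)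
    field_simp
    ring
  have h1 : ((p + q) * x - 2 * (p * q)) / ((q - p) * x) ≠ -1 := by
    intro h; rw [div_eq_iff hden] at h; nlinarith [hx.1, hx.2]
  have h2 : ((p + q) * x - 2 * (p * q)) / ((q - p) * x) ≠ 1 := by
    intro h; rw [div_eq_iff hden] at h; nlinarith [hx.1, hx.2]
  have h := (Real.hasDerivAt_arcsin h1 h2).comp x hu'
  have hsq : 1 - (((p + q) * x - 2 * (p * q)) / ((q - p) * x)) ^ 2
      = (2 * Real.sqrt (p * q) * Real.sqrt ((q - x) * (x - p)) / ((q - p) * x)) ^ 2 := by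
    rw [div_pow, div_pow, mul_pow, mul_pow, mul_pow, Real.sq_sqrt hpq0.le,
      Real.sq_sqrt hG.le]
    field_simp
    ring
  rw [Function.comp_def] at h
  refine h.congr_deriv (Eq.symm ?_)
  rw [hsq, Real.sqrt_sq (by positivity)]
  set sg := Real.sqrt ((q - x) * (x - p)) with hsg
  set sp := Real.sqrt (p * q) with hspdef
  rw [show p * q = sp ^ 2 from (Real.sq_sqrt hpq0.le).symm]
  field_simp

lemma hasDerivC {p q x : ℝ} (hp : 0 ≤ p) (hpq : p < q) (hx : x ∈ Set.Ioo p q) :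
    HasDerivAt (fun y => Real.arcsin
      ((((p+1) + (q+1)) * (y + 1) - 2 * ((p+1) * (q+1))) / (((q+1) - (p+1)) * (y + 1))))
      (Real.sqrt ((p+1) * (q+1)) / ((x + 1) * Real.sqrt ((q - x) * (x - p)))) x := by
  have hx' : x + 1 ∈ Set.Ioo (p + 1) (q + 1) := ⟨by linarith [hx.1], by linarith [hx.2]⟩
  have hp1 : (0:ℝ) < p + 1 := by linarith
  have hB := hasDerivB (p := p + 1) (q := q + 1) hp1 (by linarith) hx'
  have hinner : HasDerivAt (fun y : ℝ => y + 1) 1 x := (hasDerivAt_id x).add_const 1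
  have h := hB.comp x hinner
  rw [Function.comp_def] at h
  simp only [show q + 1 - (x + 1) = q - x from by ring,
    show x + 1 - (p + 1) = x - p from by ring, mul_one] at h
  exact h

lemma hasDerivB' {p q x : ℝ} (hp : 0 ≤ p) (hpq : p < q) (hx : x ∈ Set.Ioo p q) :
    HasDerivAt (fun y => Real.sqrt (p * q) *
        Real.arcsin (((p + q) * y - 2 * (p * q)) / ((q - p) * y)))
      (p * q / (x * Real.sqrt ((q - x) * (x - p)))) x := by
  rcases hp.eq_or_lt with h | h
  · rw [← h]
    simp only [zero_mul, Real.sqrt_zero, zero_div]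
    exact hasDerivAt_const x 0
  · have hpq0 : (0:ℝ) < p * q := mul_pos h (h.trans hpq)
    have := (hasDerivB h hpq hx).const_mul (Real.sqrt (p * q))
    refine this.congr_deriv (Eq.symm ?_)
    rw [mul_div_assoc', Real.mul_self_sqrt hpq0.le]

lemma hasDerivC' {p q x : ℝ} (hp : 0 ≤ p) (hpq : p < q) (hx : x ∈ Set.Ioo p q) :
    HasDerivAt (fun y => Real.sqrt ((p+1) * (q+1)) * Real.arcsin
      ((((p+1) + (q+1)) * (y + 1) - 2 * ((p+1) * (q+1))) / (((q+1) - (p+1)) * (y + 1))))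
      ((p+1) * (q+1) / ((x + 1) * Real.sqrt ((q - x) * (x - p)))) x := by
  have hpq1 : (0:ℝ) < (p+1) * (q+1) := by nlinarith
  have := (hasDerivC hp hpq hx).const_mul (Real.sqrt ((p+1) * (q+1)))
  refine this.congr_deriv (Eq.symm ?_)
  rw [mul_div_assoc', Real.mul_self_sqrt hpq1.le]

lemma key_integrable {p q : ℝ} (hp : 0 ≤ p) (hpq : p < q) :
    IntervalIntegrable (fun x => Real.sqrt ((q - x) * (x - p)) / (x * (1 + x)))
      MeasureTheory.volume p q := by
  rcases hp.eq_or_lt with h | h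
  · -- p = 0 : compare with √q · x^(-1/2)
    rw [← h]
    have hq : (0:ℝ) < q := by linarith
    have hbase : IntervalIntegrable (fun x : ℝ => Real.sqrt q * x ^ (-(1/2) : ℝ))
        MeasureTheory.volume 0 q :=
      (intervalIntegral.intervalIntegrable_rpow' (by norm_num)).const_mul _
    apply hbase.mono_fun
    · apply Measurable.aestronglyMeasurable
      apply Measurable.div
      · exact (Real.continuous_sqrt.comp (by fun_prop : Continuous fun x : ℝ => (q - x) * (x - 0))).measurable
      · fun_prop
    · rw [Filter.EventuallyLE, MeasureTheory.ae_restrict_iff' measurableSet_uIoc]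
      filter_upwards with x hx
      rw [Set.uIoc_of_le hq.le] at hx
      obtain ⟨hx0, hxq⟩ := hx
      have hsx : (0:ℝ) < Real.sqrt x := Real.sqrt_pos.mpr hx0
      have h1 : Real.sqrt ((q - x) * (x - 0)) ≤ Real.sqrt q * Real.sqrt x := by
        rw [← Real.sqrt_mul hq.le]
        apply Real.sqrt_le_sqrt
        nlinarith
      have h2 : x ^ (-(1/2) : ℝ) = (Real.sqrt x)⁻¹ := by
        rw [Real.rpow_neg hx0.le, Real.sqrt_eq_rpow]
      rw [Real.norm_eq_abs, Real.norm_eq_abs, abs_of_nonneg (by positivity),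
        abs_of_nonneg (by positivity), h2]
      rw [div_le_iff₀ (by positivity)]
      calc Real.sqrt ((q - x) * (x - 0)) ≤ Real.sqrt q * Real.sqrt x := h1
        _ = Real.sqrt q * (Real.sqrt x)⁻¹ * x := by
            field_simp
            rw [Real.sq_sqrt hx0.le]
        _ ≤ Real.sqrt q * (Real.sqrt x)⁻¹ * (x * (1 + x)) := by
            nlinarith [mul_nonneg (mul_nonneg (Real.sqrt_nonneg q) (inv_pos.mpr hsx).le)
              (sq_nonneg x)]
  · -- p > 0 : continuous on the interval
    apply ContinuousOn.intervalIntegrable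
    apply ContinuousOn.div
    · exact (Real.continuous_sqrt.comp (by fun_prop)).continuousOn
    · fun_prop
    · intro x hx
      rw [Set.uIcc_of_le hpq.le] at hx
      have : 0 < x := lt_of_lt_of_le h hx.1
      positivity

lemma key_integral {p q : ℝ} (hp : 0 ≤ p) (hpq : p < q) :
    ∫ x in p..q, Real.sqrt ((q - x) * (x - p)) / (x * (1 + x))
      = π * (Real.sqrt ((p+1) * (q+1)) - Real.sqrt (p * q) - 1) := by
  have hq : (0:ℝ) < q := lt_of_le_of_lt hp hpq
  have hs : (0:ℝ) < q - p := by linarith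
  set F : ℝ → ℝ := fun y =>
    -(Real.arcsin ((2 * y - (p + q)) / (q - p)))
    - Real.sqrt (p * q) * Real.arcsin (((p + q) * y - 2 * (p * q)) / ((q - p) * y))
    + Real.sqrt ((p+1) * (q+1)) * Real.arcsin
        ((((p+1) + (q+1)) * (y + 1) - 2 * ((p+1) * (q+1))) / (((q+1) - (p+1)) * (y + 1)))
    with hF
  have hcont : ContinuousOn F (Set.Icc p q) := by
    apply ContinuousOn.add
    apply ContinuousOn.sub
    · exact (Real.continuous_arcsin.comp (by fun_prop)).continuousOn.neg
    · rcases hp.eq_or_lt with h | h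
      · rw [← h]
        simp only [zero_mul, Real.sqrt_zero]
        exact continuousOn_const
      · apply ContinuousOn.mul continuousOn_const
        apply Real.continuous_arcsin.comp_continuousOn
        apply ContinuousOn.div (by fun_prop) (by fun_prop)
        intro y hy
        have : 0 < y := lt_of_lt_of_le h hy.1
        positivity
    · apply ContinuousOn.mul continuousOn_const
      apply Real.continuous_arcsin.comp_continuousOn
      apply ContinuousOn.div (by fun_prop) (by fun_prop)
      intro y hy
      have h1 : 0 < y + 1 := by have := hy.1; linarith
      have h2 : (0:ℝ) < (q+1) - (p+1) := by linarith
      positivity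
  have hderiv : ∀ x ∈ Set.Ioo p q, HasDerivAt F
      (Real.sqrt ((q - x) * (x - p)) / (x * (1 + x))) x := by
    intro x hx
    have hx0 : 0 < x := lt_of_le_of_lt hp hx.1
    have hG : (0:ℝ) < (q - x) * (x - p) := by nlinarith [hx.1, hx.2]
    have hg : 0 < Real.sqrt ((q - x) * (x - p)) := sqrtg_pos hx
    have h := ((hasDerivA hpq hx).neg.sub (hasDerivB' hp hpq hx)).add (hasDerivC' hp hpq hx)
    refine h.congr_deriv (Eq.symm ?_)
    have hrw : Real.sqrt ((q - x) * (x - p))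
        = ((q - x) * (x - p)) / Real.sqrt ((q - x) * (x - p)) := by
      rw [eq_div_iff hg.ne']
      exact Real.mul_self_sqrt hG.le
    conv_lhs => rw [hrw]
    set sg := Real.sqrt ((q - x) * (x - p)) with hsg
    field_simp
    ring
  rw [intervalIntegral.integral_eq_sub_of_hasDerivAt_of_le hpq.le hcont hderiv
    (key_integrable hp hpq)]
  -- endpoint values
  have eA_q : (2 * q - (p + q)) / (q - p) = 1 := by
    rw [div_eq_one_iff_eq hs.ne']; ring
  have eA_p : (2 * p - (p + q)) / (q - p) = -1 := by
    rw [div_eq_iff hs.ne']; ring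
  have eC_q : (((p+1) + (q+1)) * (q + 1) - 2 * ((p+1) * (q+1))) / (((q+1) - (p+1)) * (q + 1))
      = 1 := by
    rw [div_eq_one_iff_eq (by nlinarith : ((q+1) - (p+1)) * (q + 1) ≠ 0)]; ring
  have eC_p : (((p+1) + (q+1)) * (p + 1) - 2 * ((p+1) * (q+1))) / (((q+1) - (p+1)) * (p + 1))
      = -1 := by
    rw [div_eq_iff (by nlinarith : ((q+1) - (p+1)) * (p + 1) ≠ 0)]; ring
  have eB_q : Real.sqrt (p * q) * Real.arcsin (((p + q) * q - 2 * (p * q)) / ((q - p) * q))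
      = Real.sqrt (p * q) * (π / 2) := by
    rw [show ((p + q) * q - 2 * (p * q)) / ((q - p) * q) = 1 from by
      rw [div_eq_one_iff_eq (by positivity : ((q - p) * q) ≠ 0)]; ring, Real.arcsin_one]
  have eB_p : Real.sqrt (p * q) * Real.arcsin (((p + q) * p - 2 * (p * q)) / ((q - p) * p))
      = Real.sqrt (p * q) * (-(π / 2)) := by
    rcases hp.eq_or_lt with h | h
    · rw [← h]; simp
    · rw [show ((p + q) * p - 2 * (p * q)) / ((q - p) * p) = -1 from by
        rw [div_eq_iff (by positivity : ((q - p) * p) ≠ 0)]; ring, Real.arcsin_neg_one]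
  rw [hF]
  simp only [eA_q, eA_p, eC_q, eC_p, eB_q, eB_p, Real.arcsin_one, Real.arcsin_neg_one]
  ring

theorem fbp_isProbability (a b : ℝ) (ha : 0 < a) (hb : 1 < b) :
    (∫ x in (gammaM a b)..(gammaP a b),
        (b - 1) * Real.sqrt (-((x - gammaP a b) * (x - gammaM a b)))
          / (2 * π * x * (1 + x)))
      + max (1 - a) 0 = 1 := by
  have hb1 : (0:ℝ) < b - 1 := by linarith
  have hab : (0:ℝ) < a * b := by positivity
  have habm : (0:ℝ) < a + b - 1 := by linarith
  have hu0 : 0 < Real.sqrt (a * b) := Real.sqrt_pos.mpr hab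
  have hv0 : 0 < Real.sqrt (a + b - 1) := Real.sqrt_pos.mpr habm
  have hu2 : Real.sqrt (a * b) ^ 2 = a * b := Real.sq_sqrt hab.le
  have hv2 : Real.sqrt (a + b - 1) ^ 2 = a + b - 1 := Real.sq_sqrt habm.le
  have hp : 0 ≤ gammaM a b := sq_nonneg _
  have id1 : ∀ U V c : ℝ, c ≠ 0 → ((U + V)/c)^2 - ((U - V)/c)^2 = 4*(U*V)/c^2 := by
    intro U V c hc; field_simp; ring
  have id2 : ∀ U V c : ℝ, c ≠ 0 → ((U - V)/c)^2 * ((U + V)/c)^2 = ((U^2 - V^2)/c^2)^2 := by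
    intro U V c hc; field_simp; ring
  have id3 : ∀ U V c : ℝ, c ≠ 0 → (((U - V)/c)^2 + 1) * (((U + V)/c)^2 + 1)
      = 1 + 2*(U^2 + V^2)/c^2 + ((U^2 - V^2)/c^2)^2 := by
    intro U V c hc; field_simp; ring
  have hpq : gammaM a b < gammaP a b := by
    have hdiff : gammaP a b - gammaM a b
        = 4 * (Real.sqrt (a * b) * Real.sqrt (a + b - 1)) / (b - 1) ^ 2 := by
      unfold gammaP gammaM
      exact id1 _ _ _ hb1.ne'
    nlinarith [mul_pos hu0 hv0, sq_nonneg (b - 1), pow_pos hb1 2,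
      div_pos (by positivity : (0:ℝ) < 4 * (Real.sqrt (a * b) * Real.sqrt (a + b - 1)))
        (pow_pos hb1 2)]
  have hprod : gammaM a b * gammaP a b = ((a - 1) / (b - 1)) ^ 2 := by
    have e : gammaM a b * gammaP a b
        = ((Real.sqrt (a * b) ^ 2 - Real.sqrt (a + b - 1) ^ 2) / (b - 1) ^ 2) ^ 2 := by
      unfold gammaP gammaM
      exact id2 _ _ _ hb1.ne'
    rw [hu2, hv2] at e
    rw [e, show (a * b - (a + b - 1)) / (b - 1) ^ 2 = (a - 1)/(b - 1) from by
      rw [div_eq_div_iff (by positivity) hb1.ne']; ring]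
  have hsqrt1 : Real.sqrt (gammaM a b * gammaP a b) = |a - 1| / (b - 1) := by
    rw [hprod, Real.sqrt_sq_eq_abs, abs_div, abs_of_pos hb1]
  have hAdd : (gammaM a b + 1) * (gammaP a b + 1) = ((a + b) / (b - 1)) ^ 2 := by
    have e : (gammaM a b + 1) * (gammaP a b + 1)
        = 1 + 2 * (Real.sqrt (a * b) ^ 2 + Real.sqrt (a + b - 1) ^ 2) / (b - 1) ^ 2
          + ((Real.sqrt (a * b) ^ 2 - Real.sqrt (a + b - 1) ^ 2) / (b - 1) ^ 2) ^ 2 := by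
      unfold gammaP gammaM
      exact id3 _ _ _ hb1.ne'
    rw [hu2, hv2] at e
    rw [e]
    field_simp
    ring
  have hsqrt2 : Real.sqrt ((gammaM a b + 1) * (gammaP a b + 1)) = (a + b) / (b - 1) := by
    rw [hAdd, Real.sqrt_sq (by positivity)]
  have hcong : Set.EqOn (fun x => (b - 1) * Real.sqrt (-((x - gammaP a b) * (x - gammaM a b)))
          / (2 * π * x * (1 + x)))
      (fun x => ((b - 1) / (2 * π)) *
        (Real.sqrt ((gammaP a b - x) * (x - gammaM a b)) / (x * (1 + x))))
      (Set.uIcc (gammaM a b) (gammaP a b)) := by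
    intro x _
    simp only
    rw [show -((x - gammaP a b) * (x - gammaM a b))
      = (gammaP a b - x) * (x - gammaM a b) from by ring, div_mul_div_comm]
    congr 1
    ring
  rw [intervalIntegral.integral_congr hcong, intervalIntegral.integral_const_mul,
    key_integral hp hpq]
  rw [show gammaM a b + 1 = gammaM a b + 1 from rfl] at hsqrt2
  rw [hsqrt1, hsqrt2]
  rcases le_or_gt a 1 with h | h
  · rw [abs_of_nonpos (by linarith), max_eq_left (by linarith)]
    field_simp
    ring
  · rw [abs_of_pos (by linarith), max_eq_right (by linarith)]
    field_simp
    ring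
end

section
/- For all real parameters a > 0, b > 0 with a + b > 1, the free beta distribution υ_{a,b} is a probability measure; that is, ∫_{κ₋}^{κ₊} (a+b)√(−(x−κ₊)(x−κ₋))/(2π x(1−x)) dx + max(1−a, 0) + max(1−b, 0) = 1. -/
open MeasureTheory Real

/-- `κ₋` for the free beta distribution. -/
noncomputable def kappaM (a b : ℝ) : ℝ :=
  ((Real.sqrt (a * (a + b - 1)) - Real.sqrt b) / (a + b)) ^ 2

/-- `κ₊` for the free beta distribution. -/
noncomputable def kappaP (a b : ℝ) : ℝ :=
  ((Real.sqrt (a * (a + b - 1)) + Real.sqrt b) / (a + b)) ^ 2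

open Set Filter

lemma intInt_left (α β : ℝ) (h0 : 0 ≤ α) (hαβ : α < β) (hβ1 : β ≤ 1) :
    IntegrableOn (fun x => Real.sqrt ((β - x) * (x - α)) / (x * (1 - x)))
      (Ioo α ((α + β)/2)) volume := by
  set m := (α + β)/2 with hm
  have hαm : α < m := by rw [hm]; linarith
  set C := Real.sqrt (2/(β - α)) with hC
  have hmeas : Measurable (fun x => Real.sqrt ((β - x) * (x - α)) / (x * (1 - x))) := by
    fun_prop
  have hg : IntervalIntegrable (fun x => C * (x - α) ^ (-(1/2) : ℝ)) volume α m := by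
    have h1 : IntervalIntegrable (fun x : ℝ => x ^ (-(1/2) : ℝ)) volume 0 (m - α) :=
      intervalIntegral.intervalIntegrable_rpow' (by norm_num)
    have h2 := (h1.comp_sub_right α).const_mul C
    simpa using h2
  have hg' : IntegrableOn (fun x => C * (x - α) ^ (-(1/2) : ℝ)) (Ioo α m) volume :=
    (intervalIntegrable_iff_integrableOn_Ioo_of_le hαm.le).mp hg
  refine hg'.mono' (hmeas.aestronglyMeasurable) ?_
  refine (ae_restrict_iff' measurableSet_Ioo).2 (ae_of_all _ fun x hx => ?_)
  have hx0 : 0 < x := lt_of_le_of_lt h0 hx.1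
  have hxm : x < m := hx.2
  have hxb : x < β := by linarith
  have h1x : 0 < 1 - x := by linarith
  have hxa : 0 < x - α := by linarith [hx.1]
  have hbx : 0 < β - x := by linarith
  have hfnn : 0 ≤ Real.sqrt ((β - x) * (x - α)) / (x * (1 - x)) := by positivity
  rw [Real.norm_eq_abs, abs_of_nonneg hfnn]
  have hrpow : (x - α) ^ (-(1/2) : ℝ) = 1 / Real.sqrt (x - α) := by
    rw [Real.rpow_neg hxa.le, Real.sqrt_eq_rpow]
    exact (one_div _).symm
  rw [hrpow]
  have hCpos : 0 < C := Real.sqrt_pos.2 (div_pos two_pos (by linarith))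
  rw [mul_one_div, div_le_div_iff₀ (by positivity) (Real.sqrt_pos.2 hxa)]
  have e1 : Real.sqrt ((β - x) * (x - α)) * Real.sqrt (x - α)
      = Real.sqrt (β - x) * (x - α) := by
    rw [Real.sqrt_mul hbx.le, mul_assoc, Real.mul_self_sqrt hxa.le]
  rw [e1]
  have hCb : 1 ≤ C * Real.sqrt (β - x) := by
    rw [hC, ← Real.sqrt_mul (le_of_lt (div_pos two_pos (by linarith)))]
    rw [show (1:ℝ) = Real.sqrt 1 by simp]
    apply Real.sqrt_le_sqrt
    rw [div_mul_eq_mul_div, le_div_iff₀ (by linarith)]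
    nlinarith [hx.2]
  have step1 : Real.sqrt (β - x) * (x - α) ≤ (C * Real.sqrt (β - x)) * (Real.sqrt (β - x) * (x - α)) :=
    le_mul_of_one_le_left (mul_nonneg (Real.sqrt_nonneg _) hxa.le) hCb
  have step2 : (C * Real.sqrt (β - x)) * (Real.sqrt (β - x) * (x - α)) = C * ((β - x) * (x - α)) := by
    rw [show C * Real.sqrt (β - x) * (Real.sqrt (β - x) * (x - α))
      = C * ((Real.sqrt (β - x) * Real.sqrt (β - x)) * (x - α)) by ring,
      Real.mul_self_sqrt hbx.le]
  have step3 : C * ((β - x) * (x - α)) ≤ C * (x * (1 - x)) := by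
    apply mul_le_mul_of_nonneg_left _ hCpos.le
    nlinarith
  linarith

lemma intInt_right (α β : ℝ) (h0 : 0 ≤ α) (hαβ : α < β) (hβ1 : β ≤ 1) :
    IntegrableOn (fun x => Real.sqrt ((β - x) * (x - α)) / (x * (1 - x)))
      (Ioo ((α + β)/2) β) volume := by
  set m := (α + β)/2 with hm
  have hαm : α < m := by rw [hm]; linarith
  have hmβ : m < β := by rw [hm]; linarith
  set C := Real.sqrt (2/(β - α)) with hC
  have hmeas : Measurable (fun x => Real.sqrt ((β - x) * (x - α)) / (x * (1 - x))) := by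
    fun_prop
  have hg : IntervalIntegrable (fun x => C * (β - x) ^ (-(1/2) : ℝ)) volume m β := by
    have h1 : IntervalIntegrable (fun x : ℝ => x ^ (-(1/2) : ℝ)) volume 0 (β - m) :=
      intervalIntegral.intervalIntegrable_rpow' (by norm_num)
    have h2 := ((h1.comp_sub_left β).symm).const_mul C
    simpa using h2
  have hg' : IntegrableOn (fun x => C * (β - x) ^ (-(1/2) : ℝ)) (Ioo m β) volume :=
    (intervalIntegrable_iff_integrableOn_Ioo_of_le hmβ.le).mp hg
  refine hg'.mono' (hmeas.aestronglyMeasurable) ?_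
  refine (ae_restrict_iff' measurableSet_Ioo).2 (ae_of_all _ fun x hx => ?_)
  have hx0 : 0 < x := by have := hx.1; linarith
  have h1x : 0 < 1 - x := by have := hx.2; linarith
  have hxa : 0 < x - α := by have := hx.1; linarith
  have hbx : 0 < β - x := by have := hx.2; linarith
  have hfnn : 0 ≤ Real.sqrt ((β - x) * (x - α)) / (x * (1 - x)) := by positivity
  rw [Real.norm_eq_abs, abs_of_nonneg hfnn]
  have hrpow : (β - x) ^ (-(1/2) : ℝ) = 1 / Real.sqrt (β - x) := by
    rw [Real.rpow_neg hbx.le, Real.sqrt_eq_rpow]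
    exact (one_div _).symm
  rw [hrpow]
  have hCpos : 0 < C := Real.sqrt_pos.2 (div_pos two_pos (by linarith))
  rw [mul_one_div, div_le_div_iff₀ (by positivity) (Real.sqrt_pos.2 hbx)]
  have e1 : Real.sqrt ((β - x) * (x - α)) * Real.sqrt (β - x)
      = Real.sqrt (x - α) * (β - x) := by
    rw [Real.sqrt_mul hbx.le, show Real.sqrt (β-x) * Real.sqrt (x-α) * Real.sqrt (β-x)
      = Real.sqrt (x-α) * (Real.sqrt (β-x) * Real.sqrt (β-x)) by ring, Real.mul_self_sqrt hbx.le]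
  rw [e1]
  have hCb : 1 ≤ C * Real.sqrt (x - α) := by
    rw [hC, ← Real.sqrt_mul (le_of_lt (div_pos two_pos (by linarith)))]
    rw [show (1:ℝ) = Real.sqrt 1 by simp]
    apply Real.sqrt_le_sqrt
    rw [div_mul_eq_mul_div, le_div_iff₀ (by linarith)]
    nlinarith [hx.1]
  have step1 : Real.sqrt (x - α) * (β - x) ≤ (C * Real.sqrt (x - α)) * (Real.sqrt (x - α) * (β - x)) :=
    le_mul_of_one_le_left (mul_nonneg (Real.sqrt_nonneg _) hbx.le) hCb
  have step2 : (C * Real.sqrt (x - α)) * (Real.sqrt (x - α) * (β - x)) = C * ((x - α) * (β - x)) := by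
    rw [show C * Real.sqrt (x - α) * (Real.sqrt (x - α) * (β - x))
      = C * ((Real.sqrt (x - α) * Real.sqrt (x - α)) * (β - x)) by ring,
      Real.mul_self_sqrt hxa.le]
  have step3 : C * ((x - α) * (β - x)) ≤ C * (x * (1 - x)) := by
    apply mul_le_mul_of_nonneg_left _ hCpos.le
    nlinarith
  linarith

lemma hasDeriv_F (α β : ℝ) (h0 : 0 ≤ α) (hαβ : α < β) (hβ1 : β ≤ 1)
    (x : ℝ) (hx : x ∈ Ioo α β) :
    HasDerivAt (fun y => Real.arcsin ((2*y - (α+β))/(β-α))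
        - Real.sqrt (α*β) * Real.arcsin (((α+β)*y - 2*(α*β))/((β-α)*y))
        + Real.sqrt ((1-α)*(1-β)) *
            Real.arcsin (((2-α-β)*(1-y) - 2*((1-α)*(1-β)))/((β-α)*(1-y))))
      (Real.sqrt ((β - x) * (x - α)) / (x * (1 - x))) x := by
  obtain ⟨hxα, hxβ⟩ := hx
  have hx0 : 0 < x := lt_of_le_of_lt h0 hxα
  have h1x : 0 < 1 - x := by linarith
  have hxa : 0 < x - α := by linarith
  have hbx : 0 < β - x := by linarith
  have hδ : 0 < β - α := by linarith
  set R := Real.sqrt ((β - x) * (x - α)) with hR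
  have hRpos : 0 < R := Real.sqrt_pos.2 (by positivity)
  have hR2 : R^2 = (β - x) * (x - α) := Real.sq_sqrt (by positivity)
  have hA : HasDerivAt (fun y : ℝ => Real.arcsin ((2*y - (α+β))/(β-α))) (1/R) x := by
    have d1 : HasDerivAt (fun y : ℝ => (2*y - (α+β))/(β-α)) (2/(β-α)) x := by
      simpa using (((hasDerivAt_id x).const_mul 2).sub_const (α+β)).div_const (β-α)
    have hs1 : (2*x - (α+β))/(β-α) ≠ -1 := by
      intro h; rw [div_eq_iff hδ.ne'] at h; nlinarith
    have hs2 : (2*x - (α+β))/(β-α) ≠ 1 := by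
      intro h; rw [div_eq_iff hδ.ne'] at h; nlinarith
    have := (Real.hasDerivAt_arcsin hs1 hs2).comp x d1
    refine this.congr_deriv (Eq.symm ?_)
    have e : 1 - ((2*x - (α+β))/(β-α))^2 = (2*R/(β-α))^2 := by
      field_simp
      linear_combination (-4) * hR2
    rw [e, Real.sqrt_sq (by positivity)]
    field_simp
  have hG : HasDerivAt (fun y : ℝ => Real.sqrt (α*β) *
      Real.arcsin (((α+β)*y - 2*(α*β))/((β-α)*y))) (α*β/(x*R)) x := by
    rcases h0.eq_or_lt with h | hαpos
    · simp only [← h, zero_mul, Real.sqrt_zero, zero_div, mul_zero]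
      exact hasDerivAt_const x 0
    · set p := Real.sqrt (α*β) with hp
      have hαβpos : 0 < α*β := mul_pos hαpos (by linarith)
      have hppos : 0 < p := Real.sqrt_pos.2 hαβpos
      have hp2 : p^2 = α*β := Real.sq_sqrt hαβpos.le
      have dnum : HasDerivAt (fun y : ℝ => (α+β)*y - 2*(α*β)) (α+β) x := by
        simpa using ((hasDerivAt_id x).const_mul (α+β)).sub_const (2*(α*β))
      have dden : HasDerivAt (fun y : ℝ => (β-α)*y) (β-α) x := by
        simpa using (hasDerivAt_id x).const_mul (β-α)
      have hden : (β-α)*x ≠ 0 := (mul_pos hδ hx0).ne'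
      have dj := dnum.div dden hden
      set t := ((α+β)*x - 2*(α*β))/((β-α)*x) with ht
      have h1t : 1 - t^2 = (2*p*R/((β-α)*x))^2 := by
        rw [ht]; field_simp
        linear_combination (-4*p^2) * hR2 + (-4*((β - x) * (x - α))) * hp2
      have hq : 0 < (2*p*R/((β-α)*x))^2 := by positivity
      have htlt : t^2 < 1 := by nlinarith
      have ht1 : t ≠ -1 := by intro h; rw [h] at htlt; norm_num at htlt
      have ht2 : t ≠ 1 := by intro h; rw [h] at htlt; norm_num at htlt
      have dG := ((Real.hasDerivAt_arcsin ht1 ht2).comp x dj).const_mul p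
      refine dG.congr_deriv (Eq.symm ?_)
      rw [h1t, Real.sqrt_sq (by positivity)]
      field_simp
      ring
  have hGt : HasDerivAt (fun y : ℝ => Real.sqrt ((1-α)*(1-β)) *
      Real.arcsin (((2-α-β)*(1-y) - 2*((1-α)*(1-β)))/((β-α)*(1-y))))
      (-((1-α)*(1-β)/((1-x)*R))) x := by
    rcases eq_or_lt_of_le hβ1 with h | hβlt
    · simp only [h, sub_self, mul_zero, Real.sqrt_zero, zero_mul, zero_div, neg_zero]
      exact hasDerivAt_const x 0
    · set q := Real.sqrt ((1-α)*(1-β)) with hq'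
      have hqβpos : 0 < (1-α)*(1-β) := mul_pos (by linarith) (by linarith)
      have hqpos : 0 < q := Real.sqrt_pos.2 hqβpos
      have hq2 : q^2 = (1-α)*(1-β) := Real.sq_sqrt hqβpos.le
      have dnum : HasDerivAt (fun y : ℝ => (2-α-β)*(1-y) - 2*((1-α)*(1-β))) (-(2-α-β)) x := by
        have h1 : HasDerivAt (fun y : ℝ => (1:ℝ) - y) (-1) x := by
          simpa using (hasDerivAt_id x).const_sub 1
        simpa using (h1.const_mul (2-α-β)).sub_const (2*((1-α)*(1-β)))
      have dden : HasDerivAt (fun y : ℝ => (β-α)*(1-y)) (-(β-α)) x := by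
        have h1 : HasDerivAt (fun y : ℝ => (1:ℝ) - y) (-1) x := by
          simpa using (hasDerivAt_id x).const_sub 1
        simpa using h1.const_mul (β-α)
      have hden : (β-α)*(1-x) ≠ 0 := (mul_pos hδ h1x).ne'
      have dj := dnum.div dden hden
      set t := ((2-α-β)*(1-x) - 2*((1-α)*(1-β)))/((β-α)*(1-x)) with ht
      have h1t : 1 - t^2 = (2*q*R/((β-α)*(1-x)))^2 := by
        rw [ht]; field_simp
        linear_combination (-4*q^2) * hR2 + (-4*((β - x) * (x - α))) * hq2
      have hqq : 0 < (2*q*R/((β-α)*(1-x)))^2 := by positivity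
      have htlt : t^2 < 1 := by nlinarith
      have ht1 : t ≠ -1 := by intro h; rw [h] at htlt; norm_num at htlt
      have ht2 : t ≠ 1 := by intro h; rw [h] at htlt; norm_num at htlt
      have dG := ((Real.hasDerivAt_arcsin ht1 ht2).comp x dj).const_mul q
      refine dG.congr_deriv (Eq.symm ?_)
      rw [h1t, Real.sqrt_sq (by positivity)]
      field_simp
      ring
  have := (hA.sub hG).add hGt
  refine this.congr_deriv (Eq.symm ?_)
  rw [eq_comm]
  have hRx : R ≠ 0 := hRpos.ne'
  have e : R/(x*(1-x)) = R^2/(x*(1-x)*R) := by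
    rw [pow_two]; field_simp
  rw [e, hR2]
  field_simp
  ring

lemma key_integral_s9 (α β : ℝ) (h0 : 0 ≤ α) (hαβ : α < β) (hβ1 : β ≤ 1) :
    ∫ x in α..β, Real.sqrt ((β - x) * (x - α)) / (x * (1 - x))
      = π * (1 - Real.sqrt (α*β) - Real.sqrt ((1-α)*(1-β))) := by
  have hδ : 0 < β - α := by linarith
  have hβ0 : 0 < β := lt_of_le_of_lt h0 hαβ
  have hα1 : α < 1 := lt_of_lt_of_le hαβ hβ1
  have hint : IntervalIntegrable
      (fun x => Real.sqrt ((β - x) * (x - α)) / (x * (1 - x))) volume α β := by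
    have hm1 : α ≤ (α + β)/2 := by linarith
    have hm2 : (α + β)/2 ≤ β := by linarith
    exact ((intervalIntegrable_iff_integrableOn_Ioo_of_le hm1).mpr
        (intInt_left α β h0 hαβ hβ1)).trans
      ((intervalIntegrable_iff_integrableOn_Ioo_of_le hm2).mpr
        (intInt_right α β h0 hαβ hβ1))
  -- endpoint limits
  have tAa : Tendsto (fun y : ℝ => Real.arcsin ((2*y - (α+β))/(β-α)))
      (nhdsWithin α (Ioi α)) (nhds (-(π/2))) := by
    have c : ContinuousAt (fun y : ℝ => Real.arcsin ((2*y - (α+β))/(β-α))) α := by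
      exact Real.continuous_arcsin.continuousAt.comp (by fun_prop)
    have hval : (2*α - (α+β))/(β-α) = -1 := by
      rw [div_eq_iff hδ.ne']; ring
    have : Tendsto (fun y : ℝ => Real.arcsin ((2*y - (α+β))/(β-α)))
        (nhdsWithin α (Ioi α)) (nhds (Real.arcsin ((2*α - (α+β))/(β-α)))) :=
      c.continuousWithinAt
    rwa [hval, Real.arcsin_neg_one] at this
  have tAb : Tendsto (fun y : ℝ => Real.arcsin ((2*y - (α+β))/(β-α)))
      (nhdsWithin β (Iio β)) (nhds (π/2)) := by
    have c : ContinuousAt (fun y : ℝ => Real.arcsin ((2*y - (α+β))/(β-α))) β := by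
      exact Real.continuous_arcsin.continuousAt.comp (by fun_prop)
    have hval : (2*β - (α+β))/(β-α) = 1 := by
      rw [div_eq_iff hδ.ne']; ring
    have : Tendsto (fun y : ℝ => Real.arcsin ((2*y - (α+β))/(β-α)))
        (nhdsWithin β (Iio β)) (nhds (Real.arcsin ((2*β - (α+β))/(β-α)))) :=
      c.continuousWithinAt
    rwa [hval, Real.arcsin_one] at this
  have tGa : Tendsto (fun y : ℝ => Real.sqrt (α*β) *
      Real.arcsin (((α+β)*y - 2*(α*β))/((β-α)*y)))
      (nhdsWithin α (Ioi α)) (nhds (Real.sqrt (α*β) * (-(π/2)))) := by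
    rcases h0.eq_or_lt with h | hαpos
    · have hfun : (fun y : ℝ => Real.sqrt (α*β) *
          Real.arcsin (((α+β)*y - 2*(α*β))/((β-α)*y))) = fun _ => (0:ℝ) := by
        funext y; rw [← h]; simp
      rw [hfun, ← h]
      simp
    · have hden : (β-α)*α ≠ 0 := (mul_pos hδ hαpos).ne'
      have c : ContinuousAt (fun y : ℝ => Real.sqrt (α*β) *
          Real.arcsin (((α+β)*y - 2*(α*β))/((β-α)*y))) α := by
        apply ContinuousAt.mul continuousAt_const
        exact Real.continuous_arcsin.continuousAt.comp
          (ContinuousAt.div (by fun_prop) (by fun_prop) hden)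
      have hval : ((α+β)*α - 2*(α*β))/((β-α)*α) = -1 := by
        rw [div_eq_iff hden]; ring
      have : Tendsto (fun y : ℝ => Real.sqrt (α*β) *
          Real.arcsin (((α+β)*y - 2*(α*β))/((β-α)*y)))
          (nhdsWithin α (Ioi α)) (nhds (Real.sqrt (α*β) *
            Real.arcsin (((α+β)*α - 2*(α*β))/((β-α)*α)))) := c.continuousWithinAt
      rwa [hval, Real.arcsin_neg_one] at this
  have tGb : Tendsto (fun y : ℝ => Real.sqrt (α*β) *
      Real.arcsin (((α+β)*y - 2*(α*β))/((β-α)*y)))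
      (nhdsWithin β (Iio β)) (nhds (Real.sqrt (α*β) * (π/2))) := by
    have hden : (β-α)*β ≠ 0 := (mul_pos hδ hβ0).ne'
    have c : ContinuousAt (fun y : ℝ => Real.sqrt (α*β) *
        Real.arcsin (((α+β)*y - 2*(α*β))/((β-α)*y))) β := by
      apply ContinuousAt.mul continuousAt_const
      exact Real.continuous_arcsin.continuousAt.comp
        (ContinuousAt.div (by fun_prop) (by fun_prop) hden)
    have hval : ((α+β)*β - 2*(α*β))/((β-α)*β) = 1 := by
      rw [div_eq_iff hden]; ring
    have : Tendsto (fun y : ℝ => Real.sqrt (α*β) *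
        Real.arcsin (((α+β)*y - 2*(α*β))/((β-α)*y)))
        (nhdsWithin β (Iio β)) (nhds (Real.sqrt (α*β) *
          Real.arcsin (((α+β)*β - 2*(α*β))/((β-α)*β)))) := c.continuousWithinAt
    rwa [hval, Real.arcsin_one] at this
  have tHa : Tendsto (fun y : ℝ => Real.sqrt ((1-α)*(1-β)) *
      Real.arcsin (((2-α-β)*(1-y) - 2*((1-α)*(1-β)))/((β-α)*(1-y))))
      (nhdsWithin α (Ioi α)) (nhds (Real.sqrt ((1-α)*(1-β)) * (π/2))) := by
    have hden : (β-α)*(1-α) ≠ 0 := (mul_pos hδ (by linarith)).ne'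
    have c : ContinuousAt (fun y : ℝ => Real.sqrt ((1-α)*(1-β)) *
        Real.arcsin (((2-α-β)*(1-y) - 2*((1-α)*(1-β)))/((β-α)*(1-y)))) α := by
      apply ContinuousAt.mul continuousAt_const
      exact Real.continuous_arcsin.continuousAt.comp
        (ContinuousAt.div (by fun_prop) (by fun_prop) hden)
    have hval : ((2-α-β)*(1-α) - 2*((1-α)*(1-β)))/((β-α)*(1-α)) = 1 := by
      rw [div_eq_iff hden]; ring
    have : Tendsto (fun y : ℝ => Real.sqrt ((1-α)*(1-β)) *
        Real.arcsin (((2-α-β)*(1-y) - 2*((1-α)*(1-β)))/((β-α)*(1-y))))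
        (nhdsWithin α (Ioi α)) (nhds (Real.sqrt ((1-α)*(1-β)) *
          Real.arcsin (((2-α-β)*(1-α) - 2*((1-α)*(1-β)))/((β-α)*(1-α))))) :=
      c.continuousWithinAt
    rwa [hval, Real.arcsin_one] at this
  have tHb : Tendsto (fun y : ℝ => Real.sqrt ((1-α)*(1-β)) *
      Real.arcsin (((2-α-β)*(1-y) - 2*((1-α)*(1-β)))/((β-α)*(1-y))))
      (nhdsWithin β (Iio β)) (nhds (Real.sqrt ((1-α)*(1-β)) * (-(π/2)))) := by
    rcases eq_or_lt_of_le hβ1 with h | hβlt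
    · have hfun : (fun y : ℝ => Real.sqrt ((1-α)*(1-β)) *
          Real.arcsin (((2-α-β)*(1-y) - 2*((1-α)*(1-β)))/((β-α)*(1-y)))) = fun _ => (0:ℝ) := by
        funext y; rw [h]; simp
      rw [hfun, h]
      simp
    · have hden : (β-α)*(1-β) ≠ 0 := (mul_pos hδ (by linarith)).ne'
      have c : ContinuousAt (fun y : ℝ => Real.sqrt ((1-α)*(1-β)) *
          Real.arcsin (((2-α-β)*(1-y) - 2*((1-α)*(1-β)))/((β-α)*(1-y)))) β := by
        apply ContinuousAt.mul continuousAt_const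
        exact Real.continuous_arcsin.continuousAt.comp
          (ContinuousAt.div (by fun_prop) (by fun_prop) hden)
      have hval : ((2-α-β)*(1-β) - 2*((1-α)*(1-β)))/((β-α)*(1-β)) = -1 := by
        rw [div_eq_iff hden]; ring
      have : Tendsto (fun y : ℝ => Real.sqrt ((1-α)*(1-β)) *
          Real.arcsin (((2-α-β)*(1-y) - 2*((1-α)*(1-β)))/((β-α)*(1-y))))
          (nhdsWithin β (Iio β)) (nhds (Real.sqrt ((1-α)*(1-β)) *
            Real.arcsin (((2-α-β)*(1-β) - 2*((1-α)*(1-β)))/((β-α)*(1-β))))) :=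
        c.continuousWithinAt
      rwa [hval, Real.arcsin_neg_one] at this
  have ha := (tAa.sub tGa).add tHa
  have hb := (tAb.sub tGb).add tHb
  rw [intervalIntegral.integral_eq_sub_of_hasDerivAt_of_tendsto hαβ
    (fun x hx => hasDeriv_F α β h0 hαβ hβ1 x hx) hint ha hb]
  ring

theorem fbeta_isProbability (a b : ℝ) (ha : 0 < a) (hb : 0 < b) (hab : 1 < a + b) :
    (∫ x in (kappaM a b)..(kappaP a b),
        (a + b) * Real.sqrt (-((x - kappaP a b) * (x - kappaM a b)))
          / (2 * π * x * (1 - x)))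
      + max (1 - a) 0 + max (1 - b) 0 = 1 := by
  have hs : 0 < a + b := by linarith
  have hA0 : 0 < a * (a + b - 1) := mul_pos ha (by linarith)
  have hx2 : Real.sqrt (a * (a + b - 1)) ^ 2 = a * (a + b - 1) := Real.sq_sqrt hA0.le
  have hy2 : Real.sqrt b ^ 2 = b := Real.sq_sqrt hb.le
  have hxpos : 0 < Real.sqrt (a * (a + b - 1)) := Real.sqrt_pos.2 hA0
  have hypos : 0 < Real.sqrt b := Real.sqrt_pos.2 hb
  have hκm0 : 0 ≤ kappaM a b := by rw [kappaM]; positivity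
  have hlt : kappaM a b < kappaP a b := by
    rw [kappaM, kappaP, div_pow, div_pow]
    have h2 : (Real.sqrt (a * (a + b - 1)) - Real.sqrt b)^2
        < (Real.sqrt (a * (a + b - 1)) + Real.sqrt b)^2 := by
      nlinarith [mul_pos hxpos hypos]
    exact div_lt_div_of_pos_right h2 (pow_pos hs 2)
  have hsum : Real.sqrt (a * (a + b - 1)) + Real.sqrt b ≤ a + b := by
    have e : Real.sqrt (a * (a + b - 1)) * Real.sqrt b
        = Real.sqrt a * Real.sqrt (b * (a + b - 1)) := by
      rw [← Real.sqrt_mul hA0.le, ← Real.sqrt_mul ha.le]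
      congr 1; ring
    have hB0 : (0:ℝ) ≤ b * (a + b - 1) := mul_nonneg hb.le (by linarith)
    have am : 2 * (Real.sqrt a * Real.sqrt (b * (a + b - 1))) ≤ a + b * (a + b - 1) := by
      nlinarith [sq_nonneg (Real.sqrt a - Real.sqrt (b * (a + b - 1))),
        Real.sq_sqrt ha.le, Real.sq_sqrt hB0]
    have hsq : (Real.sqrt (a * (a + b - 1)) + Real.sqrt b)^2 ≤ (a + b)^2 := by
      nlinarith [hx2, hy2, e, am]
    nlinarith [hsq, Real.sqrt_nonneg (a * (a + b - 1)), Real.sqrt_nonneg b]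
  have hκp1 : kappaP a b ≤ 1 := by
    rw [kappaP, div_pow]
    rw [div_le_one (pow_pos hs 2)]
    nlinarith [hsum, Real.sqrt_nonneg (a * (a + b - 1)), Real.sqrt_nonneg b]
  -- sqrt of products
  have e0 : (Real.sqrt (a * (a + b - 1)) - Real.sqrt b) *
      (Real.sqrt (a * (a + b - 1)) + Real.sqrt b) = (a - 1) * (a + b) := by
    have : (Real.sqrt (a * (a + b - 1)) - Real.sqrt b) *
        (Real.sqrt (a * (a + b - 1)) + Real.sqrt b)
        = Real.sqrt (a * (a + b - 1)) ^ 2 - Real.sqrt b ^ 2 := by ring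
    rw [this, hx2, hy2]; ring
  have hprod1 : Real.sqrt (kappaM a b * kappaP a b) = |a - 1| / (a + b) := by
    have e1 : kappaM a b * kappaP a b
        = (((Real.sqrt (a * (a + b - 1)) - Real.sqrt b) *
            (Real.sqrt (a * (a + b - 1)) + Real.sqrt b)) / ((a+b)*(a+b)))^2 := by
      rw [kappaM, kappaP]; field_simp
    have e2 : kappaM a b * kappaP a b = ((a-1)/(a+b))^2 := by
      rw [e1, e0, mul_comm (a-1) (a+b), mul_div_mul_left _ _ hs.ne']
    rw [e2, Real.sqrt_sq_eq_abs, abs_div, abs_of_pos hs]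
  have hprod2 : Real.sqrt ((1 - kappaM a b) * (1 - kappaP a b)) = |b - 1| / (a + b) := by
    have f0 : (1 - kappaM a b) * (1 - kappaP a b) = ((b-1)/(a+b))^2 := by
      rw [kappaM, kappaP]
      generalize hu : Real.sqrt (a*(a+b-1)) = u at hx2
      generalize hv : Real.sqrt b = v at hy2
      have expand : (1 - ((u-v)/(a+b))^2) * (1 - ((u+v)/(a+b))^2)
          = (((a+b)^2 - u^2 - v^2)^2 - 4*(u^2*v^2))/((a+b)^2)^2 := by
        field_simp; ring
      rw [expand, hx2, hy2]
      field_simp; ring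
    rw [f0, Real.sqrt_sq_eq_abs, abs_div, abs_of_pos hs]
  -- rewrite integrand
  have hfun : (fun x => (a + b) * Real.sqrt (-((x - kappaP a b) * (x - kappaM a b)))
          / (2 * π * x * (1 - x)))
      = fun x => ((a+b)/(2*π)) *
          (Real.sqrt ((kappaP a b - x) * (x - kappaM a b)) / (x * (1 - x))) := by
    funext x
    rw [show -((x - kappaP a b) * (x - kappaM a b))
      = (kappaP a b - x) * (x - kappaM a b) by ring,
      show 2*π*x*(1-x) = (2*π)*(x*(1-x)) by ring, ← div_mul_div_comm]
  rw [hfun, intervalIntegral.integral_const_mul,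
    key_integral_s9 (kappaM a b) (kappaP a b) hκm0 hlt hκp1, hprod1, hprod2]
  have hπ : π ≠ 0 := Real.pi_ne_zero
  rcases le_total a 1 with hc1 | hc1 <;> rcases le_total b 1 with hc2 | hc2
  · rw [abs_of_nonpos (by linarith), abs_of_nonpos (by linarith),
      max_eq_left (by linarith), max_eq_left (by linarith)]
    field_simp
    ring
  · rw [abs_of_nonpos (by linarith), abs_of_nonneg (by linarith),
      max_eq_left (by linarith), max_eq_right (by linarith)]
    field_simp
    ring
  · rw [abs_of_nonneg (by linarith), abs_of_nonpos (by linarith),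
      max_eq_right (by linarith), max_eq_left (by linarith)]
    field_simp
    ring
  · rw [abs_of_nonneg (by linarith), abs_of_nonneg (by linarith),
      max_eq_right (by linarith), max_eq_right (by linarith)]
    field_simp
    ring
end

section
/- For all real parameters a > 1 and b > 1, the pushforward of the free beta prime distribution μ_{a,b} under the map x ↦ x/(1+x) equals the free beta distribution υ_{a,b}. -/
open MeasureTheory Real

/-- Density of the absolutely continuous part of the free beta distribution. -/
noncomputable def fbDensity (a b : ℝ) : ℝ → ℝ :=
  Set.indicator (Set.Icc (kappaM a b) (kappaP a b))
    (fun x => (a + b) * Real.sqrt (-((x - kappaP a b) * (x - kappaM a b)))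
      / (2 * π * x * (1 - x)))

/-- The free beta distribution `fβ(a, b)`. -/
noncomputable def fbeta (a b : ℝ) : Measure ℝ :=
  volume.withDensity (fun x => ENNReal.ofReal (fbDensity a b x))
    + ENNReal.ofReal (max (1 - a) 0) • Measure.dirac 0
    + ENNReal.ofReal (max (1 - b) 0) • Measure.dirac 1

lemma key_facts (a b : ℝ) (ha : 1 < a) (hb : 1 < b) :
    gammaP a b * (1 - kappaP a b) = kappaP a b ∧
    gammaM a b * (1 - kappaM a b) = kappaM a b ∧
    (1 - kappaP a b) * (1 - kappaM a b) = ((b - 1) / (a + b)) ^ 2 ∧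
    0 < kappaM a b ∧ kappaP a b < 1 ∧ 0 < gammaM a b ∧ kappaM a b ≤ kappaP a b := by
  have ha0 : (0:ℝ) ≤ a := by linarith
  have habm : (0:ℝ) ≤ a + b - 1 := by linarith
  have hb1 : (0:ℝ) < b - 1 := by linarith
  have hab : (0:ℝ) < a + b := by linarith
  set z := Real.sqrt a with hzd
  set v := Real.sqrt b with hvd
  set t := Real.sqrt (a + b - 1) with htd
  have hz : z ^ 2 = a := Real.sq_sqrt ha0
  have hv : v ^ 2 = b := Real.sq_sqrt (by linarith)
  have ht : t ^ 2 = a + b - 1 := Real.sq_sqrt habm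
  have hz0 : 0 ≤ z := Real.sqrt_nonneg _
  have hv0 : 0 ≤ v := Real.sqrt_nonneg _
  have ht0 : 0 ≤ t := Real.sqrt_nonneg _
  have hsab : Real.sqrt (a * b) = z * v := Real.sqrt_mul ha0 b
  have hsat : Real.sqrt (a * (a + b - 1)) = z * t := Real.sqrt_mul ha0 _
  have hztv : v < z * t := by
    have h : v ^ 2 < (z * t) ^ 2 := by nlinarith
    exact lt_of_pow_lt_pow_left₀ 2 (by positivity) h
  have hvtz : z < v * t := by
    have h : z ^ 2 < (v * t) ^ 2 := by nlinarith
    exact lt_of_pow_lt_pow_left₀ 2 (by positivity) h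
  have hzvt : t < z * v := by
    have h : t ^ 2 < (z * v) ^ 2 := by nlinarith
    exact lt_of_pow_lt_pow_left₀ 2 (by positivity) h
  have h1 : (z * v + t) * (v * t - z) = (b - 1) * (z * t + v) := by
    linear_combination (z * t) * hv + v * ht - v * hz
  have h1' : (z * v - t) * (v * t + z) = (b - 1) * (z * t - v) := by
    linear_combination (z * t) * hv - v * ht + v * hz
  have h2 : (a + b) ^ 2 - (z * t + v) ^ 2 = (v * t - z) ^ 2 := by
    linear_combination (-(t ^ 2) - 1) * hz + (-(t ^ 2) - 1) * hv + (-(a + b)) * ht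
  have h2' : (a + b) ^ 2 - (z * t - v) ^ 2 = (v * t + z) ^ 2 := by
    linear_combination (-(t ^ 2) - 1) * hz + (-(t ^ 2) - 1) * hv + (-(a + b)) * ht
  have eP : 1 - kappaP a b = ((v * t - z) / (a + b)) ^ 2 := by
    rw [kappaP, hsat, ← hvd, div_pow, div_pow, ← h2]; field_simp
  have eM : 1 - kappaM a b = ((v * t + z) / (a + b)) ^ 2 := by
    rw [kappaM, hsat, ← hvd, div_pow, div_pow, ← h2']; field_simp
  refine ⟨?_, ?_, ?_, ?_, ?_, ?_, ?_⟩
  · rw [eP, gammaP, kappaP, hsab, hsat, ← htd, ← hvd]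
    rw [div_pow, div_pow, div_pow, div_mul_div_comm, div_eq_div_iff (by positivity) (by positivity)]
    linear_combination ((a+b)^2 * ((z*v+t)*(v*t-z) + (b-1)*(z*t+v))) * h1
  · rw [eM, gammaM, kappaM, hsab, hsat, ← htd, ← hvd]
    rw [div_pow, div_pow, div_pow, div_mul_div_comm, div_eq_div_iff (by positivity) (by positivity)]
    linear_combination ((a+b)^2 * ((z*v-t)*(v*t+z) + (b-1)*(z*t-v))) * h1'
  · rw [eP, eM, div_pow, div_pow, div_pow, div_mul_div_comm, div_eq_div_iff (by positivity) (by positivity)]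
    linear_combination ((a+b)^2*((v*t)^2 - z^2 + (b-1)*(a+b))*(t^2)) * hv - ((a+b)^2*((v*t)^2 - z^2 + (b-1)*(a+b))) * hz + ((a+b)^2*((v*t)^2 - z^2 + (b-1)*(a+b))*b) * ht
  · rw [kappaM, hsat, ← hvd]
    exact pow_pos (div_pos (by linarith) hab) 2
  · rw [kappaP, hsat, ← hvd]
    have h : ((z * t + v) / (a + b)) ^ 2 < 1 := by
      rw [div_pow, div_lt_one (by positivity)]
      nlinarith
    linarith
  · rw [gammaM, hsab, ← htd]
    exact pow_pos (div_pos (by linarith) hb1) 2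
  · rw [kappaM, kappaP, hsat, ← hvd]
    have hbase : (z * t - v) / (a + b) ≤ (z * t + v) / (a + b) := by gcongr <;> linarith
    exact pow_le_pow_left₀ (div_nonneg (by linarith) hab.le) hbase 2

lemma phi_iff (x κ : ℝ) (hx : 0 ≤ x) (hκ1 : κ < 1) :
    (κ / (1 - κ) ≤ x ↔ κ ≤ x / (1 + x)) ∧ (x ≤ κ / (1 - κ) ↔ x / (1 + x) ≤ κ) := by
  have h1 : (0:ℝ) < 1 - κ := by linarith
  have h2 : (0:ℝ) < 1 + x := by linarith
  constructor
  · rw [div_le_iff₀ h1, le_div_iff₀ h2]; constructor <;> intro h <;> nlinarith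
  · rw [le_div_iff₀ h1, div_le_iff₀ h2]; constructor <;> intro h <;> nlinarith

lemma lintegral_image_eq_lintegral_abs_deriv_mul' {s : Set ℝ} {f f' : ℝ → ℝ}
    (hs : MeasurableSet s) (hf' : ∀ x ∈ s, HasDerivWithinAt f (f' x) s x)
    (hf : Set.InjOn f s) (g : ℝ → ENNReal) :
    ∫⁻ x in f '' s, g x = ∫⁻ x in s, ENNReal.ofReal |f' x| * g (f x) := by
  simpa only [ContinuousLinearMap.det_toSpanSingleton] using
    lintegral_image_eq_lintegral_abs_det_fderiv_mul volume hs
      (fun x hx => (hf' x hx).hasFDerivWithinAt) hf g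

theorem fbp_map_eq_fbeta (a b : ℝ) (ha : 1 < a) (hb : 1 < b) :
    (fbp a b).map (fun x => x / (1 + x)) = fbeta a b := by
  obtain ⟨kP1, kM1, kD, hkM0, hkP1, hgM0, hkMP⟩ := key_facts a b ha hb
  have hb1 : (0:ℝ) < b - 1 := by linarith
  have hab : (0:ℝ) < a + b := by linarith
  have hkM1lt : kappaM a b < 1 := lt_of_le_of_lt hkMP hkP1
  have hgPk : gammaP a b = kappaP a b / (1 - kappaP a b) := by
    rw [eq_div_iff (by linarith)]; exact kP1
  have hgMk : gammaM a b = kappaM a b / (1 - kappaM a b) := by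
    rw [eq_div_iff (by linarith)]; exact kM1
  have hφm : Measurable (fun x : ℝ => x / (1 + x)) :=
    measurable_id.div (measurable_const.add measurable_id)
  have hmaxa : ENNReal.ofReal (max (1 - a) 0) = 0 := by
    rw [max_eq_right (by linarith), ENNReal.ofReal_zero]
  have hmaxb : ENNReal.ofReal (max (1 - b) 0) = 0 := by
    rw [max_eq_right (by linarith), ENNReal.ofReal_zero]
  unfold fbp fbeta
  rw [hmaxa, hmaxb, zero_smul, zero_smul, add_zero, add_zero, add_zero]
  refine Measure.ext fun s hs => ?_
  rw [Measure.map_apply hφm hs, withDensity_apply _ (hφm hs), withDensity_apply _ hs]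
  have hFb : (fun x => ENNReal.ofReal (fbpDensity a b x))
      = Set.indicator (Set.Icc (gammaM a b) (gammaP a b)) (fun x => ENNReal.ofReal
          ((b - 1) * Real.sqrt (-((x - gammaP a b) * (x - gammaM a b)))
            / (2 * π * x * (1 + x)))) := by
    funext x
    by_cases hx : x ∈ Set.Icc (gammaM a b) (gammaP a b)
    · rw [fbpDensity, Set.indicator_of_mem hx, Set.indicator_of_mem hx]
    · rw [fbpDensity, Set.indicator_of_notMem hx, Set.indicator_of_notMem hx,
        ENNReal.ofReal_zero]
  have hGb : (fun y => ENNReal.ofReal (fbDensity a b y))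
      = Set.indicator (Set.Icc (kappaM a b) (kappaP a b)) (fun y => ENNReal.ofReal
          ((a + b) * Real.sqrt (-((y - kappaP a b) * (y - kappaM a b)))
            / (2 * π * y * (1 - y)))) := by
    funext y
    by_cases hy : y ∈ Set.Icc (kappaM a b) (kappaP a b)
    · rw [fbDensity, Set.indicator_of_mem hy, Set.indicator_of_mem hy]
    · rw [fbDensity, Set.indicator_of_notMem hy, Set.indicator_of_notMem hy,
        ENNReal.ofReal_zero]
  rw [hFb, hGb, setLIntegral_indicator measurableSet_Icc, setLIntegral_indicator measurableSet_Icc]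
  have hset : Set.Icc (gammaM a b) (gammaP a b) ∩ ((fun x => x / (1 + x)) ⁻¹' s)
      = (fun y => y / (1 - y)) '' (Set.Icc (kappaM a b) (kappaP a b) ∩ s) := by
    ext x
    constructor
    · rintro ⟨⟨hx1, hx2⟩, hxs⟩
      have hx0 : 0 < x := lt_of_lt_of_le hgM0 hx1
      have h1x : (0:ℝ) < 1 + x := by linarith
      refine ⟨x / (1 + x), ⟨⟨?_, ?_⟩, hxs⟩, ?_⟩
      · exact ((phi_iff x _ hx0.le hkM1lt).1).mp (by rw [← hgMk]; exact hx1)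
      · exact ((phi_iff x _ hx0.le hkP1).2).mp (by rw [← hgPk]; exact hx2)
      · show x / (1 + x) / (1 - x / (1 + x)) = x
        have h2 : 1 - x / (1 + x) = 1 / (1 + x) := by field_simp; ring
        rw [h2]
        field_simp
    · rintro ⟨y, ⟨⟨hy1, hy2⟩, hys⟩, rfl⟩
      have hy0 : 0 < y := lt_of_lt_of_le hkM0 hy1
      have hy1' : y < 1 := lt_of_le_of_lt hy2 hkP1
      have h1y : (0:ℝ) < 1 - y := by linarith
      have hmem : y / (1 - y) ∈ Set.Icc (gammaM a b) (gammaP a b) := by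
        constructor
        · rw [hgMk, div_le_div_iff₀ (by linarith) h1y]; nlinarith
        · rw [hgPk, div_le_div_iff₀ h1y (by linarith)]; nlinarith
      refine ⟨hmem, ?_⟩
      show y / (1 - y) / (1 + y / (1 - y)) ∈ s
      have heq : y / (1 - y) / (1 + y / (1 - y)) = y := by
        have h2 : 1 + y / (1 - y) = 1 / (1 - y) := by field_simp; ring
        rw [h2]
        field_simp
      rwa [heq]
  rw [hset]
  have hJm : MeasurableSet (Set.Icc (kappaM a b) (kappaP a b) ∩ s) :=
    measurableSet_Icc.inter hs
  have hderiv : ∀ y ∈ Set.Icc (kappaM a b) (kappaP a b) ∩ s,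
      HasDerivWithinAt (fun y : ℝ => y / (1 - y)) (1 / (1 - y) ^ 2)
        (Set.Icc (kappaM a b) (kappaP a b) ∩ s) y := by
    intro y hy
    have hy1' : y < 1 := lt_of_le_of_lt hy.1.2 hkP1
    have h1y : (1:ℝ) - y ≠ 0 := by linarith
    have hd : HasDerivAt (fun y : ℝ => y / (1 - y)) (1 / (1 - y) ^ 2) y := by
      have h := (hasDerivAt_id y).div ((hasDerivAt_const y (1:ℝ)).sub (hasDerivAt_id y)) h1y
      exact h.congr_deriv (by simp only [Pi.sub_apply, id_eq]; ring)
    exact hd.hasDerivWithinAt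
  have hinj : Set.InjOn (fun y : ℝ => y / (1 - y))
      (Set.Icc (kappaM a b) (kappaP a b) ∩ s) := by
    intro y1 hy1 y2 hy2 h
    have h11 : (1:ℝ) - y1 ≠ 0 := by
      have := lt_of_le_of_lt hy1.1.2 hkP1; linarith
    have h12 : (1:ℝ) - y2 ≠ 0 := by
      have := lt_of_le_of_lt hy2.1.2 hkP1; linarith
    simp only at h
    field_simp at h
    nlinarith [h]
  rw [lintegral_image_eq_lintegral_abs_deriv_mul' hJm hderiv hinj]
  refine setLIntegral_congr_fun hJm (fun y hy => ?_)
  obtain ⟨⟨hy1, hy2⟩, hys⟩ := hy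
  have hy0 : 0 < y := lt_of_lt_of_le hkM0 hy1
  have hy1' : y < 1 := lt_of_le_of_lt hy2 hkP1
  have h1y : (0:ℝ) < 1 - y := by linarith
  rw [← ENNReal.ofReal_mul (abs_nonneg _)]
  congr 1
  have hPne : (1:ℝ) - kappaP a b ≠ 0 := by linarith
  have hMne : (1:ℝ) - kappaM a b ≠ 0 := by linarith
  have h1yne : (1:ℝ) - y ≠ 0 := by linarith
  have hxP : y / (1 - y) - gammaP a b = (y - kappaP a b) / ((1 - y) * (1 - kappaP a b)) := by
    rw [hgPk, div_sub_div _ _ h1yne hPne]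
    congr 1
    ring
  have hxM : y / (1 - y) - gammaM a b = (y - kappaM a b) / ((1 - y) * (1 - kappaM a b)) := by
    rw [hgMk, div_sub_div _ _ h1yne hMne]
    congr 1
    ring
  have hc : (0:ℝ) < (a + b) / ((b - 1) * (1 - y)) := by positivity
  have hprod : -((y / (1 - y) - gammaP a b) * (y / (1 - y) - gammaM a b))
      = ((a + b) / ((b - 1) * (1 - y))) ^ 2 * (-((y - kappaP a b) * (y - kappaM a b))) := by
    rw [hxP, hxM, div_mul_div_comm,
      show ((1 - y) * (1 - kappaP a b)) * ((1 - y) * (1 - kappaM a b))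
        = (1 - y) ^ 2 * ((1 - kappaP a b) * (1 - kappaM a b)) by ring, kD]
    field_simp
  have hsq : Real.sqrt (-((y / (1 - y) - gammaP a b) * (y / (1 - y) - gammaM a b)))
      = ((a + b) / ((b - 1) * (1 - y))) * Real.sqrt (-((y - kappaP a b) * (y - kappaM a b))) := by
    rw [hprod, Real.sqrt_mul (sq_nonneg _), Real.sqrt_sq hc.le]
  rw [hsq, abs_of_nonneg (by positivity)]
  have hxx : 2 * π * (y / (1 - y)) * (1 + y / (1 - y)) = 2 * π * y / (1 - y) ^ 2 := by
    field_simp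
    ring
  rw [hxx]
  have hπ : π ≠ 0 := Real.pi_ne_zero
  field_simp
end

section
/- For all real parameters a > 0 and b > 1, the free beta prime distribution has mean ∫ x dμ_{a,b}(x) = a/(b−1) and variance ∫ x² dμ_{a,b}(x) − (∫ x dμ_{a,b}(x))² = a(a+b−1)/(b−1)³. -/
set_option maxHeartbeats 1000000


open MeasureTheory Real Set
open scoped NNReal ENNReal

lemma integral_sqrt_prod (α β : ℝ) (hab : α ≤ β) :
    ∫ x in α..β, Real.sqrt ((β - x) * (x - α)) = π * (β - α)^2 / 8 := by
  rcases eq_or_lt_of_le hab with h | h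
  · subst h; simp
  have hd : (0:ℝ) < β - α := by linarith
  set F : ℝ → ℝ := fun x => (2*x - α - β)/4 * Real.sqrt ((β - x) * (x - α))
      + (β - α)^2/8 * Real.arcsin ((2*x - α - β)/(β - α)) with hF
  have hcont : ContinuousOn F (Icc α β) := by
    apply ContinuousOn.add
    · exact (continuousOn_const.mul continuousOn_id |>.sub continuousOn_const
        |>.sub continuousOn_const |>.div_const 4).mul
        ((continuousOn_const.sub continuousOn_id).mul
          (continuousOn_id.sub continuousOn_const)).sqrt
    · exact continuousOn_const.mul ((Real.continuous_arcsin.comp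
        (by continuity)).continuousOn)
  have hderiv : ∀ x ∈ Ioo α β,
      HasDerivAt F (Real.sqrt ((β - x) * (x - α))) x := by
    intro x hx
    have hp : (0:ℝ) < (β - x) * (x - α) := mul_pos (by linarith [hx.2]) (by linarith [hx.1])
    set s := Real.sqrt ((β - x) * (x - α)) with hsdef
    have hs : 0 < s := Real.sqrt_pos.2 hp
    have hs2 : s^2 = (β - x) * (x - α) := Real.sq_sqrt hp.le
    have h1 : HasDerivAt (fun y => (β - y) * (y - α)) (α + β - 2*x) x := by
      have := ((hasDerivAt_id x).const_sub β).mul ((hasDerivAt_id x).sub_const α)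
      convert this using 1 <;> try rfl
      simp only [id_eq]; ring
    have h2 : HasDerivAt (fun y => Real.sqrt ((β - y) * (y - α)))
        ((α + β - 2*x) / (2 * s)) x := by
      have := (Real.hasDerivAt_sqrt hp.ne').comp x h1
      convert this using 1 <;> try rfl
      field_simp; rfl
    have h3 : HasDerivAt (fun y => (2*y - α - β)/4) (1/2) x := by
      have := ((hasDerivAt_id x).const_mul 2).sub_const (α + β)
      have := this.div_const 4
      convert this using 1 <;> try rfl
      · funext y; simp only [id_eq]; ring
      · norm_num
    have hu : HasDerivAt (fun y => (2*y - α - β)/(β - α)) (2/(β - α)) x := by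
      have := (((hasDerivAt_id x).const_mul 2).sub_const (α + β)).div_const (β - α)
      convert this using 1 <;> try rfl
      · funext y; simp only [id_eq]; ring
      · ring
    have hune : (2*x - α - β)/(β - α) ≠ -1 := by
      rw [Ne, div_eq_iff hd.ne']
      intro hc
      nlinarith [hx.1]
    have hune' : (2*x - α - β)/(β - α) ≠ 1 := by
      rw [Ne, div_eq_iff hd.ne']
      intro hc
      nlinarith [hx.2]
    have hsq : Real.sqrt (1 - ((2*x - α - β)/(β - α))^2) = 2*s/(β - α) := by
      rw [show 1 - ((2*x - α - β)/(β - α))^2 = (2*s/(β - α))^2 by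
        field_simp
        nlinarith [hs2]]
      exact Real.sqrt_sq (by positivity)
    have harc : HasDerivAt (fun y => Real.arcsin ((2*y - α - β)/(β - α)))
        (1 / Real.sqrt (1 - ((2*x - α - β)/(β - α))^2) * (2/(β - α))) x :=
      by have := (Real.hasDerivAt_arcsin hune hune').comp x hu; exact this
    have hfull := ((h3.mul h2).add ((harc).const_mul ((β - α)^2/8)))
    convert hfull using 1 <;> try rfl
    rw [hsq, ← hsdef]
    field_simp
    linear_combination 32 * hs2
  have hint : IntervalIntegrable (fun x => Real.sqrt ((β - x) * (x - α))) volume α β :=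
    (Continuous.intervalIntegrable (by continuity) α β)
  rw [intervalIntegral.integral_eq_sub_of_hasDerivAt_of_le hab hcont hderiv hint]
  have e1 : F β = (β - α)^2/8 * (π/2) := by
    simp only [hF]
    rw [show (β - β) * (β - α) = 0 by ring, Real.sqrt_zero,
      show (2*β - α - β)/(β - α) = 1 by field_simp; ring, Real.arcsin_one]
    ring
  have e2 : F α = -((β - α)^2/8 * (π/2)) := by
    simp only [hF]
    rw [show (β - α) * (α - α) = 0 by ring, Real.sqrt_zero,
      show (2*α - α - β)/(β - α) = -1 by field_simp; ring, Real.arcsin_neg_one]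
    ring
  rw [e1, e2]; ring

lemma integral_sqrt_prod_div (α β : ℝ) (hα : (-1:ℝ) < α) (hab : α ≤ β) :
    ∫ x in α..β, Real.sqrt ((β - x) * (x - α)) / (1 + x)
      = π * ((α + β)/2 + 1 - Real.sqrt ((1+α)*(1+β))) := by
  have h1α : (0:ℝ) < 1 + α := by linarith
  have h1β : (0:ℝ) < 1 + β := by linarith
  have hq : (0:ℝ) < (1+α)*(1+β) := mul_pos h1α h1β
  have hq2 : Real.sqrt ((1+α)*(1+β)) ^ 2 = (1+α)*(1+β) := Real.sq_sqrt hq.le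
  rcases eq_or_lt_of_le hab with h | h
  · subst h
    rw [intervalIntegral.integral_same]
    rw [show (1+α)*(1+α) = (1+α)^2 by ring, Real.sqrt_sq h1α.le]
    ring
  set r := Real.sqrt ((1+α)*(1+β)) with hrdef
  have hr : 0 < r := Real.sqrt_pos.2 hq
  have hd : (0:ℝ) < β - α := by linarith
  set F : ℝ → ℝ := fun x => Real.sqrt ((β - x) * (x - α))
      + ((α + β)/2 + 1) * Real.arcsin ((2*x - α - β)/(β - α))
      - r * Real.arcsin (2*((α + β)/2 + 1 - (1+α)*(1+β)/(1+x))/(β - α)) with hF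
  have hcd : ContinuousOn (fun x : ℝ => (1+α)*(1+β)/(1+x)) (Icc α β) := by
    apply continuousOn_const.div (by fun_prop)
    intro x hx
    have h1 := hx.1
    exact (show (0:ℝ) < 1 + x by linarith).ne'
  have hcont : ContinuousOn F (Icc α β) := by
    have hcs : ContinuousOn (fun x => Real.sqrt ((β - x) * (x - α))) (Icc α β) :=
      Continuous.continuousOn (by continuity)
    have hc2 : ContinuousOn (fun x : ℝ => ((α + β)/2 + 1) * Real.arcsin ((2*x - α - β)/(β - α)))
        (Icc α β) := Continuous.continuousOn (by continuity)
    have hc3 : ContinuousOn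
        (fun x => r * Real.arcsin (2*((α + β)/2 + 1 - (1+α)*(1+β)/(1+x))/(β - α))) (Icc α β) := by
      apply ContinuousOn.mul continuousOn_const
      apply Real.continuous_arcsin.comp_continuousOn
      exact ContinuousOn.div (continuousOn_const.mul (continuousOn_const.sub hcd))
        continuousOn_const (fun x _ => hd.ne')
    exact (hcs.add hc2).sub hc3
  have hderiv : ∀ x ∈ Ioo α β,
      HasDerivAt F (Real.sqrt ((β - x) * (x - α)) / (1 + x)) x := by
    intro x hx
    have ht : (0:ℝ) < 1 + x := by have := hx.1; linarith
    have hp : (0:ℝ) < (β - x) * (x - α) := mul_pos (by linarith [hx.2]) (by linarith [hx.1])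
    set s := Real.sqrt ((β - x) * (x - α)) with hsdef
    have hs : 0 < s := Real.sqrt_pos.2 hp
    have hs2 : s^2 = (β - x) * (x - α) := Real.sq_sqrt hp.le
    have h1 : HasDerivAt (fun y => (β - y) * (y - α)) (α + β - 2*x) x := by
      have := ((hasDerivAt_id x).const_sub β).mul ((hasDerivAt_id x).sub_const α)
      convert this using 1 <;> try rfl
      simp only [id_eq]; ring
    have h2 : HasDerivAt (fun y => Real.sqrt ((β - y) * (y - α)))
        ((α + β - 2*x) / (2 * s)) x := by
      have := (Real.hasDerivAt_sqrt hp.ne').comp x h1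
      convert this using 1 <;> try rfl
      field_simp; rfl
    have hu : HasDerivAt (fun y => (2*y - α - β)/(β - α)) (2/(β - α)) x := by
      have := (((hasDerivAt_id x).const_mul 2).sub_const (α + β)).div_const (β - α)
      convert this using 1 <;> try rfl
      · funext y; simp only [id_eq]; ring
      · ring
    have hune : (2*x - α - β)/(β - α) ≠ -1 := by
      rw [Ne, div_eq_iff hd.ne']
      intro hc; nlinarith [hx.1]
    have hune' : (2*x - α - β)/(β - α) ≠ 1 := by
      rw [Ne, div_eq_iff hd.ne']
      intro hc; nlinarith [hx.2]
    have hsqu : Real.sqrt (1 - ((2*x - α - β)/(β - α))^2) = 2*s/(β - α) := by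
      rw [show 1 - ((2*x - α - β)/(β - α))^2 = (2*s/(β - α))^2 by
        field_simp
        nlinarith [hs2]]
      exact Real.sqrt_sq (by positivity)
    have harc : HasDerivAt (fun y => Real.arcsin ((2*y - α - β)/(β - α)))
        (1 / Real.sqrt (1 - ((2*x - α - β)/(β - α))^2) * (2/(β - α))) x :=
      by have := (Real.hasDerivAt_arcsin hune hune').comp x hu; exact this
    -- the w part
    have hwin : HasDerivAt (fun y : ℝ => 2*((α + β)/2 + 1 - (1+α)*(1+β)/(1+y))/(β - α))
        (2*((1+α)*(1+β)/(1+x)^2)/(β - α)) x := by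
      have hinv : HasDerivAt (fun y : ℝ => (1+y)⁻¹) (-(1/(1+x)^2)) x := by
        have := ((hasDerivAt_id x).const_add 1).inv ht.ne'
        convert this using 1 <;> try rfl
        simp only [id_eq]; ring
      have := ((hinv.const_mul ((1+α)*(1+β))).const_sub ((α + β)/2 + 1)).const_mul 2
      have := this.div_const (β - α)
      convert this using 1 <;> try rfl
      ring
    have hqlt1 : (1+α)*(1+β)/(1+x) < 1 + β := by
      rw [div_lt_iff₀ ht]
      nlinarith [hx.1]
    have hqgt1 : 1 + α < (1+α)*(1+β)/(1+x) := by
      rw [lt_div_iff₀ ht]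
      nlinarith [hx.2]
    have hwne : 2*((α + β)/2 + 1 - (1+α)*(1+β)/(1+x))/(β - α) ≠ -1 := by
      rw [Ne, div_eq_iff hd.ne']
      intro hc; linarith
    have hwne' : 2*((α + β)/2 + 1 - (1+α)*(1+β)/(1+x))/(β - α) ≠ 1 := by
      rw [Ne, div_eq_iff hd.ne']
      intro hc; linarith
    have hsqw : Real.sqrt (1 - (2*((α + β)/2 + 1 - (1+α)*(1+β)/(1+x))/(β - α))^2)
        = 2*r*s/((β - α)*(1+x)) := by
      have e : (2*r*s)^2 = 4*((1+α)*(1+β))*((β-x)*(x-α)) := by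
        linear_combination (4*r^2)*hs2 + (4*((β-x)*(x-α)))*hq2
      rw [show 1 - (2*((α + β)/2 + 1 - (1+α)*(1+β)/(1+x))/(β - α))^2
          = (2*r*s/((β - α)*(1+x)))^2 by
        rw [div_pow, div_pow, e]
        field_simp
        ring]
      exact Real.sqrt_sq (by positivity)
    have harw : HasDerivAt (fun y => Real.arcsin (2*((α + β)/2 + 1 - (1+α)*(1+β)/(1+y))/(β - α)))
        (1 / Real.sqrt (1 - (2*((α + β)/2 + 1 - (1+α)*(1+β)/(1+x))/(β - α))^2)
          * (2*((1+α)*(1+β)/(1+x)^2)/(β - α))) x :=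
      by have := (Real.hasDerivAt_arcsin hwne hwne').comp x hwin; exact this
    have hfull := (h2.add (harc.const_mul ((α + β)/2 + 1))).sub (harw.const_mul r)
    convert hfull using 1 <;> try rfl
    rw [hsqu, hsqw, one_div_div, one_div_div]
    have t2 : ((α + β)/2 + 1) * ((β - α)/(2*s) * (2/(β - α))) = ((α + β)/2 + 1)/s := by
      field_simp
      
    have t3 : r * ((β - α)*(1+x)/(2*r*s) * (2*((1+α)*(1+β)/(1+x)^2)/(β - α)))
        = (1+α)*(1+β)/(s*(1+x)) := by
      field_simp
      
    rw [t2, t3]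
    rw [eq_comm]
    field_simp
    linear_combination (-2) * hs2
  have hint : IntervalIntegrable (fun x => Real.sqrt ((β - x) * (x - α)) / (1 + x)) volume α β := by
    apply ContinuousOn.intervalIntegrable
    rw [Set.uIcc_of_le hab]
    apply ContinuousOn.div (Continuous.continuousOn (by continuity)) (by fun_prop)
    intro x hx
    have h1 := hx.1
    exact (show (0:ℝ) < 1 + x by linarith).ne'
  rw [intervalIntegral.integral_eq_sub_of_hasDerivAt_of_le hab hcont hderiv hint]
  have e1 : F β = ((α + β)/2 + 1) * (π/2) - r * (π/2) := by
    simp only [hF]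
    rw [show (β - β) * (β - α) = 0 by ring, Real.sqrt_zero,
      show (2*β - α - β)/(β - α) = 1 by rw [div_eq_one_iff_eq hd.ne']; ring,
      show 2*((α + β)/2 + 1 - (1+α)*(1+β)/(1+β))/(β - α) = 1 by
        rw [div_eq_one_iff_eq hd.ne']
        field_simp
        ring,
      Real.arcsin_one]
    ring
  have e2 : F α = -(((α + β)/2 + 1) * (π/2) - r * (π/2)) := by
    simp only [hF]
    rw [show (β - α) * (α - α) = 0 by ring, Real.sqrt_zero,
      show (2*α - α - β)/(β - α) = -1 by rw [div_eq_iff hd.ne']; ring,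
      show 2*((α + β)/2 + 1 - (1+α)*(1+β)/(1+α))/(β - α) = -1 by
        rw [div_eq_iff hd.ne']
        field_simp
        ring,
      Real.arcsin_neg_one]
    ring
  rw [e1, e2]; ring

section
variable {a b : ℝ}

lemma gamma_nonneg : 0 ≤ gammaM a b := sq_nonneg _

lemma gamma_diff (ha : 0 < a) (hb : 1 < b) :
    gammaP a b - gammaM a b = 4*Real.sqrt (a*b)*Real.sqrt (a+b-1)/(b-1)^2 := by
  have hb1 : (0:ℝ) < b - 1 := by linarith
  unfold gammaM gammaP
  set X := Real.sqrt (a*b)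
  set Y := Real.sqrt (a+b-1)
  field_simp
  ring

lemma gamma_le (ha : 0 < a) (hb : 1 < b) : gammaM a b ≤ gammaP a b := by
  have h := gamma_diff ha hb
  have h2 : 0 ≤ 4*Real.sqrt (a*b)*Real.sqrt (a+b-1)/(b-1)^2 := by positivity
  linarith

lemma gamma_sum (ha : 0 < a) (hb : 1 < b) :
    gammaM a b + gammaP a b = 2*(a*b + (a+b-1))/(b-1)^2 := by
  have hb1 : (0:ℝ) < b - 1 := by linarith
  have hX2 : Real.sqrt (a*b) ^ 2 = a*b := Real.sq_sqrt (by positivity)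
  have hY2 : Real.sqrt (a+b-1) ^ 2 = a+b-1 := Real.sq_sqrt (by linarith)
  unfold gammaM gammaP
  set X := Real.sqrt (a*b)
  set Y := Real.sqrt (a+b-1)
  field_simp
  linear_combination 2*hX2 + 2*hY2

lemma gamma_qq (ha : 0 < a) (hb : 1 < b) :
    (1 + gammaM a b) * (1 + gammaP a b) = ((a+b)/(b-1))^2 := by
  have hb1 : (0:ℝ) < b - 1 := by linarith
  have hX2 : Real.sqrt (a*b) ^ 2 = a*b := Real.sq_sqrt (by positivity)
  have hY2 : Real.sqrt (a+b-1) ^ 2 = a+b-1 := Real.sq_sqrt (by linarith)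
  unfold gammaM gammaP
  set X := Real.sqrt (a*b)
  set Y := Real.sqrt (a+b-1)
  field_simp
  linear_combination (2*(b-1)^2 + (X^2 - Y^2 + a*b - (a+b-1))) * hX2
    + (2*(b-1)^2 - (X^2 - Y^2 + a*b - (a+b-1))) * hY2

lemma gamma_sqrt_qq (ha : 0 < a) (hb : 1 < b) :
    Real.sqrt ((1 + gammaM a b) * (1 + gammaP a b)) = (a+b)/(b-1) := by
  rw [gamma_qq ha hb, Real.sqrt_sq (by apply div_nonneg <;> linarith)]

lemma gamma_diff_sq (ha : 0 < a) (hb : 1 < b) :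
    (gammaP a b - gammaM a b)^2 = 16*(a*b)*(a+b-1)/(b-1)^4 := by
  have hb1 : (0:ℝ) < b - 1 := by linarith
  have hX2 : Real.sqrt (a*b) ^ 2 = a*b := Real.sq_sqrt (by positivity)
  have hY2 : Real.sqrt (a+b-1) ^ 2 = a+b-1 := Real.sq_sqrt (by linarith)
  rw [gamma_diff ha hb]
  set X := Real.sqrt (a*b)
  set Y := Real.sqrt (a+b-1)
  field_simp
  linear_combination (16*Y^2)*hX2 + (16*(a*b))*hY2

end

lemma fbpDensity_measurable (a b : ℝ) : Measurable (fbpDensity a b) := by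
  unfold fbpDensity
  apply Measurable.indicator _ measurableSet_Icc
  apply Measurable.div
  · fun_prop
  · fun_prop

lemma fbpDensity_nonneg (a b : ℝ) (hb : 1 < b) : ∀ x, 0 ≤ fbpDensity a b x := by
  intro x
  unfold fbpDensity
  apply Set.indicator_nonneg
  intro x hx
  have h0 : (0:ℝ) ≤ gammaM a b := sq_nonneg _
  have hx0 : (0:ℝ) ≤ x := le_trans h0 hx.1
  apply div_nonneg
  · have := Real.sqrt_nonneg (-((x - gammaP a b) * (x - gammaM a b)))
    nlinarith
  · positivity

lemma integral_fbp_eq (a b : ℝ) (hb : 1 < b) (g : ℝ → ℝ)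
    (hgm : Measurable g) (hg0 : g 0 = 0)
    (hInt : Integrable (fun x => fbpDensity a b x * g x) volume) :
    ∫ x, g x ∂(fbp a b) = ∫ x, fbpDensity a b x * g x := by
  have hmeas := fbpDensity_measurable a b
  have hnn := fbpDensity_nonneg a b hb
  have hdm : Measurable fun x => ENNReal.ofReal (fbpDensity a b x) := hmeas.ennreal_ofReal
  have heq : (fun x => g x * (ENNReal.ofReal (fbpDensity a b x)).toReal)
      = fun x => fbpDensity a b x * g x := by
    funext x
    rw [ENNReal.toReal_ofReal (hnn x), mul_comm]
  have hI1 : Integrable g (volume.withDensity fun x => ENNReal.ofReal (fbpDensity a b x)) := by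
    rw [integrable_withDensity_iff hdm (ae_of_all _ fun x => ENNReal.ofReal_lt_top)]
    rw [heq]
    exact hInt
  have hI2 : Integrable g (ENNReal.ofReal (max (1 - a) 0) • Measure.dirac (0:ℝ)) := by
    apply Integrable.smul_measure _ ENNReal.ofReal_ne_top
    refine ⟨hgm.aestronglyMeasurable, ?_⟩
    simp only [HasFiniteIntegral]
    rw [lintegral_dirac' _ (hgm.enorm)]
    exact ENNReal.coe_lt_top
  unfold fbp
  rw [integral_add_measure hI1 hI2, integral_smul_measure, integral_dirac g 0, hg0]
  simp only [smul_zero, add_zero]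
  have hrfl : (fun x => ENNReal.ofReal (fbpDensity a b x))
      = fun x => ((Real.toNNReal (fbpDensity a b x) : ℝ≥0) : ℝ≥0∞) := rfl
  rw [hrfl, integral_withDensity_eq_integral_smul hmeas.real_toNNReal g]
  congr 1
  funext x
  rw [NNReal.smul_def, Real.coe_toNNReal _ (hnn x), smul_eq_mul]


theorem fbp_mean_variance (a b : ℝ) (ha : 0 < a) (hb : 1 < b) :
    (∫ x, x ∂(fbp a b)) = a / (b - 1) ∧
    (∫ x, x ^ 2 ∂(fbp a b)) - (∫ x, x ∂(fbp a b)) ^ 2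
      = a * (a + b - 1) / (b - 1) ^ 3 := by

  have hb1 : (0:ℝ) < b - 1 := by linarith
  have hA0 : (0:ℝ) ≤ gammaM a b := gamma_nonneg
  have hle := gamma_le ha hb
  have hgtm1 : (-1:ℝ) < gammaM a b := by linarith
  have hπ : (0:ℝ) < π := Real.pi_pos
  have hden : ∀ x ∈ Icc (gammaM a b) (gammaP a b), (2*π*(1+x)) ≠ 0 := by
    intro x hx
    have hx0 : (0:ℝ) ≤ x := le_trans hA0 hx.1
    positivity
  have hcS : Continuous (fun x => Real.sqrt ((gammaP a b - x)*(x - gammaM a b))) := by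
    continuity
  have hcont1 : ContinuousOn
      (fun x => (b-1) * Real.sqrt ((gammaP a b - x)*(x - gammaM a b)) / (2*π*(1+x)))
      (Icc (gammaM a b) (gammaP a b)) :=
    ContinuousOn.div (continuous_const.mul hcS).continuousOn (by fun_prop) hden
  have hcont2 : ContinuousOn
      (fun x => (b-1) * x * Real.sqrt ((gammaP a b - x)*(x - gammaM a b)) / (2*π*(1+x)))
      (Icc (gammaM a b) (gammaP a b)) :=
    ContinuousOn.div (((continuous_const.mul continuous_id).mul hcS)).continuousOn
      (by fun_prop) hden
  have hpt1 : (fun x => fbpDensity a b x * x) = Set.indicator (Icc (gammaM a b) (gammaP a b))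
      (fun x => (b-1) * Real.sqrt ((gammaP a b - x)*(x - gammaM a b)) / (2*π*(1+x))) := by
    funext x
    unfold fbpDensity
    by_cases hx : x ∈ Icc (gammaM a b) (gammaP a b)
    · rw [Set.indicator_of_mem hx, Set.indicator_of_mem hx,
        show -((x - gammaP a b)*(x - gammaM a b)) = (gammaP a b - x)*(x - gammaM a b) by ring]
      rcases eq_or_lt_of_le (le_trans hA0 hx.1) with h0 | h0
      · rw [← h0] at hx ⊢
        have hM0 : gammaM a b = 0 := le_antisymm hx.1 hA0
        rw [hM0]
        simp
      · have h1x : (0:ℝ) < 1 + x := by linarith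
        field_simp
        
    · rw [Set.indicator_of_notMem hx, Set.indicator_of_notMem hx, zero_mul]
  have hpt2 : (fun x => fbpDensity a b x * x^2) = Set.indicator (Icc (gammaM a b) (gammaP a b))
      (fun x => (b-1) * x * Real.sqrt ((gammaP a b - x)*(x - gammaM a b)) / (2*π*(1+x))) := by
    funext x
    unfold fbpDensity
    by_cases hx : x ∈ Icc (gammaM a b) (gammaP a b)
    · rw [Set.indicator_of_mem hx, Set.indicator_of_mem hx,
        show -((x - gammaP a b)*(x - gammaM a b)) = (gammaP a b - x)*(x - gammaM a b) by ring]
      rcases eq_or_lt_of_le (le_trans hA0 hx.1) with h0 | h0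
      · rw [← h0] at hx ⊢
        have hM0 : gammaM a b = 0 := le_antisymm hx.1 hA0
        rw [hM0]
        simp
      · have h1x : (0:ℝ) < 1 + x := by linarith
        field_simp
        
    · rw [Set.indicator_of_notMem hx, Set.indicator_of_notMem hx, zero_mul]
  have hInt1 : Integrable (fun x => fbpDensity a b x * x) volume := by
    rw [hpt1]
    exact (integrable_indicator_iff measurableSet_Icc).2
      (hcont1.integrableOn_compact isCompact_Icc)
  have hInt2 : Integrable (fun x => fbpDensity a b x * x^2) volume := by
    rw [hpt2]
    exact (integrable_indicator_iff measurableSet_Icc).2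
      (hcont2.integrableOn_compact isCompact_Icc)
  have hm1 : (∫ x, x ∂(fbp a b)) = a/(b-1) := by
    rw [integral_fbp_eq a b hb (fun x => x) (by fun_prop) rfl hInt1, hpt1,
      integral_indicator measurableSet_Icc, integral_Icc_eq_integral_Ioc,
      ← intervalIntegral.integral_of_le hle,
      show (fun x => (b-1) * Real.sqrt ((gammaP a b - x)*(x - gammaM a b)) / (2*π*(1+x)))
        = fun x => ((b-1)/(2*π)) * (Real.sqrt ((gammaP a b - x)*(x - gammaM a b))/(1+x))
        from funext fun x => (div_mul_div_comm _ _ _ _).symm,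
      intervalIntegral.integral_const_mul,
      integral_sqrt_prod_div _ _ hgtm1 hle, gamma_sqrt_qq ha hb, gamma_sum ha hb]
    field_simp
    ring
  refine ⟨hm1, ?_⟩
  have hm2 : (∫ x, x^2 ∂(fbp a b)) = a*(a*b+b-1)/(b-1)^3 := by
    rw [integral_fbp_eq a b hb (fun x => x^2) (by fun_prop) (by norm_num) hInt2, hpt2,
      integral_indicator measurableSet_Icc, integral_Icc_eq_integral_Ioc,
      ← intervalIntegral.integral_of_le hle]
    have hEq : Set.EqOn
        (fun x => (b-1) * x * Real.sqrt ((gammaP a b - x)*(x - gammaM a b)) / (2*π*(1+x)))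
        (fun x => ((b-1)/(2*π)) * Real.sqrt ((gammaP a b - x)*(x - gammaM a b))
          - ((b-1)/(2*π)) * (Real.sqrt ((gammaP a b - x)*(x - gammaM a b))/(1+x)))
        (Set.uIcc (gammaM a b) (gammaP a b)) := by
      intro x hx
      rw [Set.uIcc_of_le hle] at hx
      have h1x : (0:ℝ) < 1 + x := by have := hx.1; linarith
      simp only
      set s := Real.sqrt ((gammaP a b - x)*(x - gammaM a b))
      field_simp
      ring
    rw [intervalIntegral.integral_congr hEq]
    have hii2 : IntervalIntegrable
        (fun x => ((b-1)/(2*π)) * (Real.sqrt ((gammaP a b - x)*(x - gammaM a b))/(1+x)))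
        volume (gammaM a b) (gammaP a b) := by
      apply ContinuousOn.intervalIntegrable
      rw [Set.uIcc_of_le hle]
      apply ContinuousOn.mul continuousOn_const
      apply ContinuousOn.div hcS.continuousOn (by fun_prop)
      intro x hx
      have := hx.1
      exact (show (0:ℝ) < 1 + x by linarith).ne'
    rw [intervalIntegral.integral_sub (f := fun x => ((b-1)/(2*π)) * Real.sqrt ((gammaP a b - x)*(x - gammaM a b)))
        ((continuous_const.mul hcS).intervalIntegrable _ _) hii2,
      intervalIntegral.integral_const_mul, intervalIntegral.integral_const_mul,
      integral_sqrt_prod _ _ hle, integral_sqrt_prod_div _ _ hgtm1 hle,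
      gamma_sqrt_qq ha hb, gamma_sum ha hb, gamma_diff_sq ha hb]
    field_simp
    ring
  rw [hm2, hm1]
  field_simp
  ring
end
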